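/- arXiv:1610.08774 — 2 statements merged into one kernel-verified Lean document; each statement's English description precedes it below -/
import Mathlib

section
/- In a tangent category with negatives, for an affine vertical connection K : T²(M) → T(M) (a vertical connection on the tangent bundle p_M) and vector fields w₁, w₂ on M, the torsion tensor is given by the standard expression: T_K(w₁, w₂) = ∇_K(w₁, w₂) − ∇_K(w₂, w₁) − [w₁, w₂]. -/
open CategoryTheory CategoryTheory.Limits

open scoped Classical

universe v u

variable {C : Type u} [Category.{v} C]

/-- Chosen pullback: explicit pullback data for a cospan `f : A ⟶ Z ⟵ B : g`. -/
structure ChosenPB {A B Z : C} (f : A ⟶ Z) (g : B ⟶ Z) where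
  P : C
  pr0 : P ⟶ A
  pr1 : P ⟶ B
  comm : pr0 ≫ f = pr1 ≫ g
  pair : ∀ {X : C} (u : X ⟶ A) (v : X ⟶ B), u ≫ f = v ≫ g → (X ⟶ P)
  pair_pr0 : ∀ {X : C} (u : X ⟶ A) (v : X ⟶ B) (h : u ≫ f = v ≫ g),
    pair u v h ≫ pr0 = u
  pair_pr1 : ∀ {X : C} (u : X ⟶ A) (v : X ⟶ B) (h : u ≫ f = v ≫ g),
    pair u v h ≫ pr1 = v
  hom_ext : ∀ {X : C} (w w' : X ⟶ P),
    w ≫ pr0 = w' ≫ pr0 → w ≫ pr1 = w' ≫ pr1 → w = w'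

/-- Witness that the endofunctor `T` preserves the chosen pullback `PB`. -/
structure PBLift (T : C ⥤ C) {A B Z : C} {f : A ⟶ Z} {g : B ⟶ Z} (PB : ChosenPB f g) where
  pair : ∀ {X : C} (u : X ⟶ T.obj A) (v : X ⟶ T.obj B),
    u ≫ T.map f = v ≫ T.map g → (X ⟶ T.obj PB.P)
  pair_pr0 : ∀ {X : C} (u : X ⟶ T.obj A) (v : X ⟶ T.obj B)
    (h : u ≫ T.map f = v ≫ T.map g), pair u v h ≫ T.map PB.pr0 = u
  pair_pr1 : ∀ {X : C} (u : X ⟶ T.obj A) (v : X ⟶ T.obj B)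
    (h : u ≫ T.map f = v ≫ T.map g), pair u v h ≫ T.map PB.pr1 = v
  hom_ext : ∀ {X : C} (w w' : X ⟶ T.obj PB.P),
    w ≫ T.map PB.pr0 = w' ≫ T.map PB.pr0 → w ≫ T.map PB.pr1 = w' ≫ T.map PB.pr1 → w = w'

/-- The image of a preserved chosen pullback is again a chosen pullback. -/
def PBLift.toChosenPB {T : C ⥤ C} {A B Z : C} {f : A ⟶ Z} {g : B ⟶ Z} {PB : ChosenPB f g}
    (L : PBLift T PB) : ChosenPB (T.map f) (T.map g) where
  P := T.obj PB.P
  pr0 := T.map PB.pr0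
  pr1 := T.map PB.pr1
  comm := by rw [← T.map_comp, ← T.map_comp, PB.comm]
  pair := L.pair
  pair_pr0 := L.pair_pr0
  pair_pr1 := L.pair_pr1
  hom_ext := L.hom_ext

/-- Iterated endofunctor `Tⁿ`. -/
def fpow (T : C ⥤ C) : ℕ → C ⥤ C
  | 0 => 𝟭 C
  | n + 1 => fpow T n ⋙ T

/-- A tangent category in the sense of Cockett–Cruttwell, presented with chosen
pullbacks `T₂M` of `p_M` along itself (preserved by each `Tⁿ`), addition `+`,
projection `p`, zero `0`, vertical lift `ℓ` and canonical flip `c`, together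
with the universality of the vertical lift. Sums, associativity etc. are
expressed in generalized-element form via the chosen pullback pairings. -/
structure TangentCat (C : Type u) [Category.{v} C] where
  T : C ⥤ C
  p : T ⟶ 𝟭 C
  zero : 𝟭 C ⟶ T
  l : T ⟶ T ⋙ T
  c : T ⋙ T ⟶ T ⋙ T
  T2 : ∀ M : C, ChosenPB (p.app M) (p.app M)
  T2T : ∀ M : C, PBLift T (T2 M)
  T2Tn : ∀ (M : C) (n : ℕ), PBLift (fpow T n) (T2 M)
  add : ∀ M : C, (T2 M).P ⟶ T.obj M
  add_nat : ∀ {M N : C} (f : M ⟶ N) {X : C} (u v : X ⟶ T.obj M)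
    (h : u ≫ p.app M = v ≫ p.app M)
    (h' : (u ≫ T.map f) ≫ p.app N = (v ≫ T.map f) ≫ p.app N),
    (T2 M).pair u v h ≫ add M ≫ T.map f
      = (T2 N).pair (u ≫ T.map f) (v ≫ T.map f) h' ≫ add N
  zero_p : ∀ M : C, zero.app M ≫ p.app M = 𝟙 M
  add_p : ∀ M : C, add M ≫ p.app M = (T2 M).pr0 ≫ p.app M
  add_comm' : ∀ (M : C) {X : C} (f g : X ⟶ T.obj M) (h : f ≫ p.app M = g ≫ p.app M),
    (T2 M).pair f g h ≫ add M = (T2 M).pair g f h.symm ≫ add M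
  add_assoc' : ∀ (M : C) {X : C} (f g k : X ⟶ T.obj M)
    (h1 : f ≫ p.app M = g ≫ p.app M) (h2 : g ≫ p.app M = k ≫ p.app M)
    (h3 : ((T2 M).pair f g h1 ≫ add M) ≫ p.app M = k ≫ p.app M)
    (h4 : f ≫ p.app M = ((T2 M).pair g k h2 ≫ add M) ≫ p.app M),
    (T2 M).pair ((T2 M).pair f g h1 ≫ add M) k h3 ≫ add M
      = (T2 M).pair f ((T2 M).pair g k h2 ≫ add M) h4 ≫ add M
  add_zero' : ∀ (M : C) {X : C} (f : X ⟶ T.obj M)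
    (h : f ≫ p.app M = (f ≫ p.app M ≫ zero.app M) ≫ p.app M),
    (T2 M).pair f (f ≫ p.app M ≫ zero.app M) h ≫ add M = f
  l_Tp : ∀ M : C, l.app M ≫ T.map (p.app M) = p.app M ≫ zero.app M
  l_zero : ∀ M : C, zero.app M ≫ l.app M = zero.app M ≫ T.map (zero.app M)
  l_add : ∀ (M : C) {X : C} (f g : X ⟶ T.obj M) (h : f ≫ p.app M = g ≫ p.app M),
    ∃ w : X ⟶ T.obj (T2 M).P,
      w ≫ T.map (T2 M).pr0 = f ≫ l.app M ∧ w ≫ T.map (T2 M).pr1 = g ≫ l.app M ∧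
      (T2 M).pair f g h ≫ add M ≫ l.app M = w ≫ T.map (add M)
  c_p : ∀ M : C, c.app M ≫ p.app (T.obj M) = T.map (p.app M)
  c_zero : ∀ M : C, T.map (zero.app M) ≫ c.app M = zero.app (T.obj M)
  c_add : ∀ (M : C) {X : C} (u v : X ⟶ T.obj (T.obj M))
    (h : u ≫ T.map (p.app M) = v ≫ T.map (p.app M))
    (h' : (u ≫ c.app M) ≫ p.app (T.obj M) = (v ≫ c.app M) ≫ p.app (T.obj M)),
    ∃ w : X ⟶ T.obj (T2 M).P,
      w ≫ T.map (T2 M).pr0 = u ∧ w ≫ T.map (T2 M).pr1 = v ∧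
      w ≫ T.map (add M) ≫ c.app M
        = (T2 (T.obj M)).pair (u ≫ c.app M) (v ≫ c.app M) h' ≫ add (T.obj M)
  l_c : ∀ M : C, l.app M ≫ c.app M = l.app M
  c_c : ∀ M : C, c.app M ≫ c.app M = 𝟙 (T.obj (T.obj M))
  l_l : ∀ M : C, l.app M ≫ T.map (l.app M) = l.app M ≫ l.app (T.obj M)
  c_T_c : ∀ M : C, c.app (T.obj M) ≫ T.map (c.app M) ≫ c.app (T.obj M)
    = T.map (c.app M) ≫ c.app (T.obj M) ≫ T.map (c.app M)
  l_T_c : ∀ M : C, l.app (T.obj M) ≫ T.map (c.app M) ≫ c.app (T.obj M)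
    = c.app M ≫ T.map (l.app M)
  vmu : ∀ M : C, (T2 M).P ⟶ T.obj (T.obj M)
  vmu_spec : ∀ M : C, ∃ w : (T2 M).P ⟶ T.obj (T2 M).P,
    w ≫ T.map (T2 M).pr0 = (T2 M).pr0 ≫ l.app M ∧
    w ≫ T.map (T2 M).pr1 = (T2 M).pr1 ≫ zero.app (T.obj M) ∧
    vmu M = w ≫ T.map (add M)
  vlift : ∀ {X M : C} (f : X ⟶ T.obj (T.obj M)),
    f ≫ T.map (p.app M) = f ≫ T.map (p.app M) ≫ p.app M ≫ zero.app M → (X ⟶ (T2 M).P)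
  vlift_vmu : ∀ {X M : C} (f : X ⟶ T.obj (T.obj M))
    (h : f ≫ T.map (p.app M) = f ≫ T.map (p.app M) ≫ p.app M ≫ zero.app M),
    vlift f h ≫ vmu M = f
  vmu_mono : ∀ {X M : C} (w w' : X ⟶ (T2 M).P), w ≫ vmu M = w' ≫ vmu M → w = w'

/-- Negatives: each tangent bundle is a commutative group bundle. -/
structure HasNegatives {C : Type u} [Category.{v} C] (D : TangentCat C) where
  neg : ∀ M : C, D.T.obj M ⟶ D.T.obj M
  neg_p : ∀ M : C, neg M ≫ D.p.app M = D.p.app M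
  neg_add : ∀ (M : C) {X : C} (f : X ⟶ D.T.obj M)
    (h : f ≫ D.p.app M = (f ≫ neg M) ≫ D.p.app M),
    (D.T2 M).pair f (f ≫ neg M) h ≫ D.add M = f ≫ D.p.app M ≫ D.zero.app M

/-- Fibrewise sum of two maps into a tangent bundle (defined when the maps
agree under `p`; otherwise a default value). -/
noncomputable def TangentCat.hadd (D : TangentCat C) {X M : C}
    (f g : X ⟶ D.T.obj M) : X ⟶ D.T.obj M :=
  if h : f ≫ D.p.app M = g ≫ D.p.app M then (D.T2 M).pair f g h ≫ D.add M else f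

/-- Fibrewise difference `f - g` of two maps into a tangent bundle. -/
noncomputable def TangentCat.sub (D : TangentCat C) (N : HasNegatives D) {X M : C}
    (f g : X ⟶ D.T.obj M) : X ⟶ D.T.obj M :=
  D.hadd f (g ≫ N.neg M)

/-- The bracketing operation `{f}` for the tangent bundle, obtained from the
universality (equalizer property) of the vertical lift. -/
noncomputable def TangentCat.brkT (D : TangentCat C) {X M : C}
    (f : X ⟶ D.T.obj (D.T.obj M)) : X ⟶ D.T.obj M :=
  if h : f ≫ D.T.map (D.p.app M) = f ≫ D.T.map (D.p.app M) ≫ D.p.app M ≫ D.zero.app M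
  then D.vlift f h ≫ (D.T2 M).pr0 else f ≫ D.p.app (D.T.obj M)

/-- The Lie bracket of vector fields: `[w₁,w₂] = {w₁T(w₂) − w₂T(w₁)c}`. -/
noncomputable def TangentCat.lie (D : TangentCat C) (N : HasNegatives D) {M : C}
    (w1 w2 : M ⟶ D.T.obj M) : M ⟶ D.T.obj M :=
  D.brkT (D.sub N (w1 ≫ D.T.map w2) (w2 ≫ D.T.map w1 ≫ D.c.app M))

/-- A differential bundle `𝗊 = (q, +_q, 0_q, λ)` on `E` over `M` in the tangent
category `D`, with chosen pullbacks `E₂` (of `q` along itself) and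
`T(M) ×_M E` (of `p_M` along `q`), both preserved by each `Tⁿ`, together with
the lift axioms and the universality of the lift (in equalizer form). -/
structure DiffBundle {C : Type u} [Category.{v} C] (D : TangentCat C) (E M : C) where
  q : E ⟶ M
  E2 : ChosenPB q q
  TE2 : PBLift D.T E2
  TE2n : ∀ n : ℕ, PBLift (fpow D.T n) E2
  P : ChosenPB (D.p.app M) q
  TP : PBLift D.T P
  TPn : ∀ n : ℕ, PBLift (fpow D.T n) P
  addq : E2.P ⟶ E
  zeroq : M ⟶ E
  lam : E ⟶ D.T.obj E
  addq_q : addq ≫ q = E2.pr0 ≫ q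
  zeroq_q : zeroq ≫ q = 𝟙 M
  addq_comm : ∀ {X : C} (f g : X ⟶ E) (h : f ≫ q = g ≫ q),
    E2.pair f g h ≫ addq = E2.pair g f h.symm ≫ addq
  addq_assoc : ∀ {X : C} (f g k : X ⟶ E)
    (h1 : f ≫ q = g ≫ q) (h2 : g ≫ q = k ≫ q)
    (h3 : (E2.pair f g h1 ≫ addq) ≫ q = k ≫ q)
    (h4 : f ≫ q = (E2.pair g k h2 ≫ addq) ≫ q),
    E2.pair (E2.pair f g h1 ≫ addq) k h3 ≫ addq
      = E2.pair f (E2.pair g k h2 ≫ addq) h4 ≫ addq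
  addq_zero : ∀ {X : C} (f : X ⟶ E) (h : f ≫ q = (f ≫ q ≫ zeroq) ≫ q),
    E2.pair f (f ≫ q ≫ zeroq) h ≫ addq = f
  lam_Tq : lam ≫ D.T.map q = q ≫ D.zero.app M
  lam_zero1 : zeroq ≫ lam = D.zero.app M ≫ D.T.map zeroq
  lam_add1 : ∀ {X : C} (f g : X ⟶ E) (h : f ≫ q = g ≫ q),
    ∃ w : X ⟶ D.T.obj E2.P,
      w ≫ D.T.map E2.pr0 = f ≫ lam ∧ w ≫ D.T.map E2.pr1 = g ≫ lam ∧
      E2.pair f g h ≫ addq ≫ lam = w ≫ D.T.map addq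
  lam_p : lam ≫ D.p.app E = q ≫ zeroq
  lam_zero2 : zeroq ≫ lam = zeroq ≫ D.zero.app E
  lam_add2 : ∀ {X : C} (f g : X ⟶ E) (h : f ≫ q = g ≫ q)
    (h' : (f ≫ lam) ≫ D.p.app E = (g ≫ lam) ≫ D.p.app E),
    E2.pair f g h ≫ addq ≫ lam = (D.T2 E).pair (f ≫ lam) (g ≫ lam) h' ≫ D.add E
  lam_l : lam ≫ D.l.app E = lam ≫ D.T.map lam
  mu : E2.P ⟶ D.T.obj E
  mu_spec : ∃ w : E2.P ⟶ D.T.obj E2.P,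
    w ≫ D.T.map E2.pr0 = E2.pr0 ≫ lam ∧
    w ≫ D.T.map E2.pr1 = E2.pr1 ≫ D.zero.app E ∧
    mu = w ≫ D.T.map addq
  muLift : ∀ {X : C} (f : X ⟶ D.T.obj E),
    f ≫ D.T.map q = f ≫ D.p.app E ≫ q ≫ D.zero.app M → (X ⟶ E2.P)
  muLift_mu : ∀ {X : C} (f : X ⟶ D.T.obj E)
    (h : f ≫ D.T.map q = f ≫ D.p.app E ≫ q ≫ D.zero.app M),
    muLift f h ≫ mu = f
  muLift_q : ∀ {X : C} (f : X ⟶ D.T.obj E)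
    (h : f ≫ D.T.map q = f ≫ D.p.app E ≫ q ≫ D.zero.app M),
    muLift f h ≫ E2.pr0 ≫ q = f ≫ D.p.app E ≫ q
  mu_mono : ∀ {X : C} (w w' : X ⟶ E2.P), w ≫ mu = w' ≫ mu → w = w'

/-- The bracketing operation `{f}` for a differential bundle. -/
noncomputable def DiffBundle.brk {D : TangentCat C} {E M : C} (B : DiffBundle D E M)
    {X : C} (f : X ⟶ D.T.obj E) : X ⟶ E :=
  if h : f ≫ D.T.map B.q = f ≫ D.p.app E ≫ B.q ≫ D.zero.app M
  then B.muLift f h ≫ B.E2.pr0 else f ≫ D.p.app E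

/-- Negatives for a differential bundle (the fibrewise group structure). -/
structure BundleNegatives {D : TangentCat C} {E M : C} (B : DiffBundle D E M) where
  neg : E ⟶ E
  neg_q : neg ≫ B.q = B.q
  neg_add : ∀ {X : C} (f : X ⟶ E) (h : f ≫ B.q = (f ≫ neg) ≫ B.q),
    B.E2.pair f (f ≫ neg) h ≫ B.addq = f ≫ B.q ≫ B.zeroq

/-- Fibrewise sum of maps into `E` for the bundle addition `+_q`. -/
noncomputable def DiffBundle.qadd {D : TangentCat C} {E M : C} (B : DiffBundle D E M)
    {X : C} (f g : X ⟶ E) : X ⟶ E :=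
  if h : f ≫ B.q = g ≫ B.q then B.E2.pair f g h ≫ B.addq else f

/-- Fibrewise difference of maps into `E` for the bundle addition `+_q`. -/
noncomputable def DiffBundle.qsub {D : TangentCat C} {E M : C} (B : DiffBundle D E M)
    (NB : BundleNegatives B) {X : C} (f g : X ⟶ E) : X ⟶ E :=
  B.qadd f (g ≫ NB.neg)

/-- The horizontal descent `U = ⟨T(q), p⟩ : T(E) ⟶ T(M) ×_M E`. -/
def TangentCat.hdesc (D : TangentCat C) {E M : C} (q : E ⟶ M)
    (P : ChosenPB (D.p.app M) q) : D.T.obj E ⟶ P.P :=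
  P.pair (D.T.map q) (D.p.app E) (by simpa using D.p.naturality q)

/-- A vertical connection on the differential bundle with projection `q` and
lift `lam`: a retraction `K` of `lam` with `Kq = pq`, `Kλ = ℓT(K)` and
`Kλ = T(λ)cT(K)` (equivalently, `(K,p)` and `(K,q)` are linear bundle
morphisms). -/
def IsVerticalConnection (D : TangentCat C) {E M : C} (q : E ⟶ M)
    (lam : E ⟶ D.T.obj E) (K : D.T.obj E ⟶ E) : Prop :=
  lam ≫ K = 𝟙 E ∧
  K ≫ q = D.p.app E ≫ q ∧
  K ≫ lam = D.l.app E ≫ D.T.map K ∧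
  K ≫ lam = D.T.map lam ≫ D.c.app E ≫ D.T.map K

/-- Flatness of a vertical connection: `cT(K)K = T(K)K`. -/
def IsFlat (D : TangentCat C) {E : C} (K : D.T.obj E ⟶ E) : Prop :=
  D.c.app E ≫ D.T.map K ≫ K = D.T.map K ≫ K

/-- A horizontal connection on the differential bundle with projection `q`,
lift `lam` and horizontal pullback `P = T(M) ×_M E`: a section `H` of the
horizontal descent `U = ⟨T(q),p⟩` with `Hℓ = (ℓ×0)T(H)` and
`HT(λ)c = (0×λ)T(H)` (equivalently, `(H,1)` is linear into `p_E` and into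
`T(𝗊)`). -/
def IsHorizontalConnection (D : TangentCat C) {E M : C} (q : E ⟶ M)
    (lam : E ⟶ D.T.obj E) (P : ChosenPB (D.p.app M) q)
    (H : P.P ⟶ D.T.obj E) : Prop :=
  H ≫ D.T.map q = P.pr0 ∧
  H ≫ D.p.app E = P.pr1 ∧
  (∃ w : P.P ⟶ D.T.obj P.P,
    w ≫ D.T.map P.pr0 = P.pr0 ≫ D.l.app M ∧
    w ≫ D.T.map P.pr1 = P.pr1 ≫ D.zero.app E ∧
    H ≫ D.l.app E = w ≫ D.T.map H) ∧
  (∃ w : P.P ⟶ D.T.obj P.P,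
    w ≫ D.T.map P.pr0 = P.pr0 ≫ D.zero.app (D.T.obj M) ∧
    w ≫ D.T.map P.pr1 = P.pr1 ≫ lam ∧
    H ≫ D.T.map lam ≫ D.c.app E = w ≫ D.T.map H)

/-- A (full) connection, in unbundled form: a vertical connection `K` and a
horizontal connection `H` with `HK = π₁q0_q` and `⟨K,p⟩μ + UH = 1`. -/
noncomputable def IsConnectionPair (D : TangentCat C) {E M : C} (q : E ⟶ M)
    (lam : E ⟶ D.T.obj E) (EP : ChosenPB q q) (zeroq : M ⟶ E)
    (mu : EP.P ⟶ D.T.obj E) (P : ChosenPB (D.p.app M) q)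
    (K : D.T.obj E ⟶ E) (H : P.P ⟶ D.T.obj E) : Prop :=
  IsVerticalConnection D q lam K ∧
  IsHorizontalConnection D q lam P H ∧
  H ≫ K = P.pr1 ≫ q ≫ zeroq ∧
  ∃ R : D.T.obj E ⟶ EP.P, R ≫ EP.pr0 = K ∧ R ≫ EP.pr1 = D.p.app E ∧
    D.hadd (R ≫ mu) (D.hdesc q P ≫ H) = 𝟙 (D.T.obj E)

/-- A connection on a differential bundle. -/
noncomputable def IsConnection {D : TangentCat C} {E M : C} (B : DiffBundle D E M)
    (K : D.T.obj E ⟶ E) (H : B.P.P ⟶ D.T.obj E) : Prop :=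
  IsConnectionPair D B.q B.lam B.E2 B.zeroq B.mu B.P K H

/-- A Finsler connection on a differential bundle. -/
def IsFinslerConnection {D : TangentCat C} {E M : C} (B : DiffBundle D E M)
    (R : D.T.obj E ⟶ B.E2.P) : Prop :=
  B.mu ≫ R = 𝟙 B.E2.P ∧
  R ≫ B.E2.pr1 = D.p.app E ∧
  R ≫ B.E2.pr0 ≫ B.lam = D.T.map B.lam ≫ D.c.app E ≫ D.T.map (R ≫ B.E2.pr0) ∧
  D.l.app E ≫ D.T.map (R ≫ B.E2.pr0) = R ≫ B.E2.pr0 ≫ B.lam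

/-- The covariant derivative `∇_K(w,s) = wT(s)K`. -/
def nabla (D : TangentCat C) {E M : C} (K : D.T.obj E ⟶ E)
    (w : M ⟶ D.T.obj M) (s : M ⟶ E) : M ⟶ E :=
  w ≫ D.T.map s ≫ K

section Aux

private lemma pairPre {A B Z X Y : C} {f : A ⟶ Z} {g : B ⟶ Z} (PB : ChosenPB f g)
    (y : Y ⟶ X) {u : X ⟶ A} {v : X ⟶ B} (h : u ≫ f = v ≫ g)
    (h' : (y ≫ u) ≫ f = (y ≫ v) ≫ g) :
    y ≫ PB.pair u v h = PB.pair (y ≫ u) (y ≫ v) h' :=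
  PB.hom_ext _ _
    (by rw [Category.assoc, PB.pair_pr0, PB.pair_pr0])
    (by rw [Category.assoc, PB.pair_pr1, PB.pair_pr1])

private lemma pairCongr {A B Z X : C} {f : A ⟶ Z} {g : B ⟶ Z} (PB : ChosenPB f g)
    {u u' : X ⟶ A} {v v' : X ⟶ B} (hu : u = u') (hv : v = v')
    (h : u ≫ f = v ≫ g) (h' : u' ≫ f = v' ≫ g) :
    PB.pair u v h = PB.pair u' v' h' := by
  subst hu; subst hv; rfl

private lemma p_nat (D : TangentCat C) {M N : C} (f : M ⟶ N) :
    D.T.map f ≫ D.p.app N = D.p.app M ≫ f := by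
  simpa using D.p.naturality f

private lemma zero_nat (D : TangentCat C) {M N : C} (f : M ⟶ N) :
    f ≫ D.zero.app N = D.zero.app M ≫ D.T.map f := by
  simpa using D.zero.naturality f

private lemma l_p' (D : TangentCat C) (M : C) :
    D.l.app M ≫ D.p.app (D.T.obj M) = D.p.app M ≫ D.zero.app M := by
  calc D.l.app M ≫ D.p.app (D.T.obj M)
      = (D.l.app M ≫ D.c.app M) ≫ D.p.app (D.T.obj M) := by rw [D.l_c]
    _ = D.l.app M ≫ D.T.map (D.p.app M) := by rw [Category.assoc, D.c_p]
    _ = D.p.app M ≫ D.zero.app M := D.l_Tp M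

private lemma c_Tp (D : TangentCat C) (M : C) :
    D.c.app M ≫ D.T.map (D.p.app M) = D.p.app (D.T.obj M) := by
  rw [← D.c_p, ← Category.assoc, D.c_c]; simp

private lemma hadd_def (D : TangentCat C) {X M : C} {f g : X ⟶ D.T.obj M}
    (h : f ≫ D.p.app M = g ≫ D.p.app M) :
    D.hadd f g = (D.T2 M).pair f g h ≫ D.add M := dif_pos h

private lemma hadd_p (D : TangentCat C) {X M : C} {f g : X ⟶ D.T.obj M}
    (h : f ≫ D.p.app M = g ≫ D.p.app M) :
    D.hadd f g ≫ D.p.app M = f ≫ D.p.app M := by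
  rw [hadd_def D h, Category.assoc, D.add_p, ← Category.assoc, (D.T2 M).pair_pr0]

private lemma hadd_pre (D : TangentCat C) {X Y M : C} (y : Y ⟶ X) {f g : X ⟶ D.T.obj M}
    (h : f ≫ D.p.app M = g ≫ D.p.app M) :
    y ≫ D.hadd f g = D.hadd (y ≫ f) (y ≫ g) := by
  have h' : (y ≫ f) ≫ D.p.app M = (y ≫ g) ≫ D.p.app M := by
    rw [Category.assoc, Category.assoc, h]
  rw [hadd_def D h, hadd_def D h', ← Category.assoc, pairPre (D.T2 M) y h h']

private lemma hadd_map (D : TangentCat C) {X M M' : C} (f' : M ⟶ M') {u v : X ⟶ D.T.obj M}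
    (h : u ≫ D.p.app M = v ≫ D.p.app M) :
    D.hadd u v ≫ D.T.map f' = D.hadd (u ≫ D.T.map f') (v ≫ D.T.map f') := by
  have h' : (u ≫ D.T.map f') ≫ D.p.app M' = (v ≫ D.T.map f') ≫ D.p.app M' := by
    rw [Category.assoc, p_nat D f', Category.assoc, p_nat D f',
      ← Category.assoc, h, Category.assoc]
  rw [hadd_def D h, hadd_def D h', Category.assoc, D.add_nat f' u v h h']

private lemma hadd_comm (D : TangentCat C) {X M : C} {f g : X ⟶ D.T.obj M}
    (h : f ≫ D.p.app M = g ≫ D.p.app M) :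
    D.hadd f g = D.hadd g f := by
  rw [hadd_def D h, hadd_def D h.symm, D.add_comm' M f g h]

private lemma hadd_assoc (D : TangentCat C) {X M : C} {f g k : X ⟶ D.T.obj M}
    (h1 : f ≫ D.p.app M = g ≫ D.p.app M) (h2 : g ≫ D.p.app M = k ≫ D.p.app M) :
    D.hadd (D.hadd f g) k = D.hadd f (D.hadd g k) := by
  have h3 : ((D.T2 M).pair f g h1 ≫ D.add M) ≫ D.p.app M = k ≫ D.p.app M := by
    rw [← hadd_def D h1, hadd_p D h1, h1, h2]
  have h4 : f ≫ D.p.app M = ((D.T2 M).pair g k h2 ≫ D.add M) ≫ D.p.app M := by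
    rw [← hadd_def D h2, hadd_p D h2, h1]
  rw [hadd_def D h1, hadd_def D h2, hadd_def D h3, hadd_def D h4,
    D.add_assoc' M f g k h1 h2 h3 h4]

private lemma hadd_zero (D : TangentCat C) {X M : C} {f z : X ⟶ D.T.obj M}
    (hz : z = f ≫ D.p.app M ≫ D.zero.app M) :
    D.hadd f z = f := by
  subst hz
  have h : f ≫ D.p.app M = (f ≫ D.p.app M ≫ D.zero.app M) ≫ D.p.app M := by
    rw [Category.assoc, Category.assoc, D.zero_p]; simp
  rw [hadd_def D h, D.add_zero' M f h]

private lemma hadd_neg (D : TangentCat C) (N : HasNegatives D) {X M : C} (f : X ⟶ D.T.obj M) :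
    D.hadd f (f ≫ N.neg M) = f ≫ D.p.app M ≫ D.zero.app M := by
  have h : f ≫ D.p.app M = (f ≫ N.neg M) ≫ D.p.app M := by
    rw [Category.assoc, N.neg_p]
  rw [hadd_def D h, N.neg_add M f h]

private lemma hadd_cancel (D : TangentCat C) (N : HasNegatives D) {X M : C}
    {x a a' : X ⟶ D.T.obj M}
    (hxa : x ≫ D.p.app M = a ≫ D.p.app M) (hxa' : x ≫ D.p.app M = a' ≫ D.p.app M)
    (heq : D.hadd x a = D.hadd x a') : a = a' := by
  have hn : (x ≫ N.neg M) ≫ D.p.app M = x ≫ D.p.app M := by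
    rw [Category.assoc, N.neg_p]
  have key : ∀ (b : X ⟶ D.T.obj M), x ≫ D.p.app M = b ≫ D.p.app M →
      D.hadd (x ≫ N.neg M) (D.hadd x b) = b := by
    intro b hb
    rw [← hadd_assoc D (by rw [hn]) hb,
      hadd_comm D (f := x ≫ N.neg M) (g := x) (by rw [hn]), hadd_neg D N x]
    rw [hadd_comm D (f := x ≫ D.p.app M ≫ D.zero.app M) (g := b)
      (by rw [Category.assoc, Category.assoc, D.zero_p]; simpa using hb)]
    exact hadd_zero D (by rw [← Category.assoc, hb, Category.assoc])
  rw [← key a hxa, ← key a' hxa', heq]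

private lemma l_hadd (D : TangentCat C) {X M : C} {x y : X ⟶ D.T.obj M}
    (h : x ≫ D.p.app M = y ≫ D.p.app M) :
    D.hadd x y ≫ D.l.app M = D.hadd (x ≫ D.l.app M) (y ≫ D.l.app M) := by
  obtain ⟨w, hw0, hw1, hw⟩ := D.l_add M x y h
  have hTp : (x ≫ D.l.app M) ≫ D.T.map (D.p.app M)
      = (y ≫ D.l.app M) ≫ D.T.map (D.p.app M) := by
    rw [Category.assoc, D.l_Tp, Category.assoc, D.l_Tp, ← Category.assoc, h, Category.assoc]
  have hc' : ((x ≫ D.l.app M) ≫ D.c.app M) ≫ D.p.app (D.T.obj M)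
      = ((y ≫ D.l.app M) ≫ D.c.app M) ≫ D.p.app (D.T.obj M) := by
    rw [Category.assoc (x ≫ D.l.app M), D.c_p, Category.assoc (y ≫ D.l.app M), D.c_p]
    exact hTp
  obtain ⟨ω, hω0, hω1, hωc⟩ := D.c_add M (x ≫ D.l.app M) (y ≫ D.l.app M) hTp hc'
  have hwω : ω = w := (D.T2T M).hom_ext _ _ (by rw [hω0, hw0]) (by rw [hω1, hw1])
  have hlp : (x ≫ D.l.app M) ≫ D.p.app (D.T.obj M)
      = (y ≫ D.l.app M) ≫ D.p.app (D.T.obj M) := by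
    rw [Category.assoc, l_p' D M, Category.assoc, l_p' D M, ← Category.assoc, h, Category.assoc]
  rw [hadd_def D h, hadd_def D hlp]
  have hw' := congrArg (fun t => t ≫ D.c.app M) hw
  simp only [Category.assoc] at hw'
  simp only [Category.assoc]
  conv_lhs => rw [← D.l_c M]
  rw [hw', ← hwω, hωc]
  refine congrArg (· ≫ D.add (D.T.obj M)) (pairCongr _ ?_ ?_ _ _) <;>
    rw [Category.assoc, D.l_c]



private lemma zero_p_a (D : TangentCat C) (M : C) {Z : C} (f : M ⟶ Z) :
    D.zero.app M ≫ D.p.app M ≫ f = f := by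
  rw [← Category.assoc, D.zero_p]; simp

private lemma neg_p_a (D : TangentCat C) (N : HasNegatives D) (M : C) {Z : C} (f : M ⟶ Z) :
    N.neg M ≫ D.p.app M ≫ f = D.p.app M ≫ f := by
  rw [← Category.assoc, N.neg_p]

private lemma Tp_p (D : TangentCat C) (M : C) :
    D.T.map (D.p.app M) ≫ D.p.app M = D.p.app (D.T.obj M) ≫ D.p.app M := by
  simpa using D.p.naturality (D.p.app M)

private lemma Tpp_a (D : TangentCat C) (M : C) {Z : C} (f : M ⟶ Z) :
    D.T.map (D.p.app M) ≫ D.p.app M ≫ f = D.p.app (D.T.obj M) ≫ D.p.app M ≫ f := by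
  rw [← Category.assoc, Tp_p D M, Category.assoc]

private lemma l_cancel (D : TangentCat C) {M : C} (K : D.T.obj (D.T.obj M) ⟶ D.T.obj M)
    (hK : IsVerticalConnection D (D.p.app M) (D.l.app M) K)
    {X : C} {u v : X ⟶ D.T.obj M} (h : u ≫ D.l.app M = v ≫ D.l.app M) : u = v := by
  have h2 := congrArg (fun t => t ≫ K) h
  simp only [Category.assoc] at h2
  rw [hK.1] at h2
  simpa using h2

private lemma Kp_a (D : TangentCat C) {M : C} (K : D.T.obj (D.T.obj M) ⟶ D.T.obj M)
    (hK : IsVerticalConnection D (D.p.app M) (D.l.app M) K) {Z : C} (f : M ⟶ Z) :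
    K ≫ D.p.app M ≫ f = D.p.app (D.T.obj M) ≫ D.p.app M ≫ f := by
  rw [← Category.assoc, hK.2.1, Category.assoc]

private lemma hadd_K (D : TangentCat C) {M : C} (K : D.T.obj (D.T.obj M) ⟶ D.T.obj M)
    (hK : IsVerticalConnection D (D.p.app M) (D.l.app M) K)
    {X : C} {u v : X ⟶ D.T.obj (D.T.obj M)}
    (h : u ≫ D.p.app (D.T.obj M) = v ≫ D.p.app (D.T.obj M)) :
    D.hadd u v ≫ K = D.hadd (u ≫ K) (v ≫ K) := by
  have h' : (u ≫ K) ≫ D.p.app M = (v ≫ K) ≫ D.p.app M := by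
    simp only [Category.assoc, hK.2.1]
    rw [← Category.assoc, ← Category.assoc, h]
  have hlp' : (u ≫ D.l.app (D.T.obj M)) ≫ D.p.app (D.T.obj (D.T.obj M))
      = (v ≫ D.l.app (D.T.obj M)) ≫ D.p.app (D.T.obj (D.T.obj M)) := by
    simp only [Category.assoc, l_p' D (D.T.obj M)]
    rw [← Category.assoc, ← Category.assoc, h]
  apply l_cancel D K hK
  calc (D.hadd u v ≫ K) ≫ D.l.app M
      = D.hadd u v ≫ D.l.app (D.T.obj M) ≫ D.T.map K := by
        rw [Category.assoc, hK.2.2.1]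
    _ = D.hadd (u ≫ D.l.app (D.T.obj M)) (v ≫ D.l.app (D.T.obj M)) ≫ D.T.map K := by
        rw [← Category.assoc, l_hadd D h]
    _ = D.hadd ((u ≫ D.l.app (D.T.obj M)) ≫ D.T.map K)
          ((v ≫ D.l.app (D.T.obj M)) ≫ D.T.map K) := hadd_map D K hlp'
    _ = D.hadd ((u ≫ K) ≫ D.l.app M) ((v ≫ K) ≫ D.l.app M) := by
        simp only [Category.assoc, ← hK.2.2.1]
    _ = D.hadd (u ≫ K) (v ≫ K) ≫ D.l.app M := (l_hadd D h').symm

private lemma K_zero (D : TangentCat C) (N : HasNegatives D) {M : C}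
    (K : D.T.obj (D.T.obj M) ⟶ D.T.obj M)
    (hK : IsVerticalConnection D (D.p.app M) (D.l.app M) K) :
    D.zero.app (D.T.obj M) ≫ K = D.p.app M ≫ D.zero.app M := by
  have hz : D.hadd (D.zero.app (D.T.obj M)) (D.zero.app (D.T.obj M))
      = D.zero.app (D.T.obj M) := by
    apply hadd_zero D
    rw [zero_p_a]
  have h1 : D.hadd (D.zero.app (D.T.obj M) ≫ K) (D.zero.app (D.T.obj M) ≫ K)
      = D.zero.app (D.T.obj M) ≫ K := by
    rw [← hadd_K D K hK rfl, hz]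
  have h2 : D.hadd (D.zero.app (D.T.obj M) ≫ K)
      ((D.zero.app (D.T.obj M) ≫ K) ≫ D.p.app M ≫ D.zero.app M)
      = D.zero.app (D.T.obj M) ≫ K := hadd_zero D rfl
  have h3 := hadd_cancel D N (x := D.zero.app (D.T.obj M) ≫ K) rfl
    (by simp only [Category.assoc, D.zero_p, zero_p_a D]; simp)
    (h1.trans h2.symm)
  have h4 : (D.zero.app (D.T.obj M) ≫ K) ≫ D.p.app M = D.p.app M := by
    simp only [Category.assoc, hK.2.1, zero_p_a D]
  calc D.zero.app (D.T.obj M) ≫ K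
      = (D.zero.app (D.T.obj M) ≫ K) ≫ D.p.app M ≫ D.zero.app M := h3
    _ = D.p.app M ≫ D.zero.app M := by rw [← Category.assoc, h4]

private lemma neg_K (D : TangentCat C) (N : HasNegatives D) {M : C}
    (K : D.T.obj (D.T.obj M) ⟶ D.T.obj M)
    (hK : IsVerticalConnection D (D.p.app M) (D.l.app M) K)
    {X : C} (g : X ⟶ D.T.obj (D.T.obj M)) :
    (g ≫ N.neg (D.T.obj M)) ≫ K = (g ≫ K) ≫ N.neg M := by
  have hgn : g ≫ D.p.app (D.T.obj M) = (g ≫ N.neg (D.T.obj M)) ≫ D.p.app (D.T.obj M) := by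
    rw [Category.assoc, N.neg_p]
  apply hadd_cancel D N (x := g ≫ K)
    (by simp only [Category.assoc, Functor.id_obj, hK.2.1, neg_p_a D N])
    (by simp only [Category.assoc, Functor.id_obj, hK.2.1, neg_p_a D N, N.neg_p])
  calc D.hadd (g ≫ K) ((g ≫ N.neg (D.T.obj M)) ≫ K)
      = D.hadd g (g ≫ N.neg (D.T.obj M)) ≫ K := (hadd_K D K hK hgn).symm
    _ = (g ≫ D.p.app (D.T.obj M) ≫ D.zero.app (D.T.obj M)) ≫ K := by
        rw [hadd_neg D N g]
    _ = g ≫ D.p.app (D.T.obj M) ≫ D.p.app M ≫ D.zero.app M := by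
        simp only [Category.assoc]; rw [K_zero D N K hK]
    _ = (g ≫ K) ≫ D.p.app M ≫ D.zero.app M := by
        simp only [Category.assoc, Kp_a D K hK]
    _ = D.hadd (g ≫ K) ((g ≫ K) ≫ N.neg M) := (hadd_neg D N (g ≫ K)).symm

private lemma neg_Tp (D : TangentCat C) (N : HasNegatives D) {M : C}
    {X : C} (g : X ⟶ D.T.obj (D.T.obj M)) :
    (g ≫ N.neg (D.T.obj M)) ≫ D.T.map (D.p.app M)
      = (g ≫ D.T.map (D.p.app M)) ≫ N.neg M := by
  have hgn : g ≫ D.p.app (D.T.obj M) = (g ≫ N.neg (D.T.obj M)) ≫ D.p.app (D.T.obj M) := by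
    rw [Category.assoc, N.neg_p]
  have hTpz : D.zero.app (D.T.obj M) ≫ D.T.map (D.p.app M) = D.p.app M ≫ D.zero.app M :=
    (zero_nat D (D.p.app M)).symm
  apply hadd_cancel D N (x := g ≫ D.T.map (D.p.app M))
    (by simp only [Category.assoc, Functor.id_obj, Tpp_a D M, Tp_p D M, neg_p_a D N])
    (by simp only [Category.assoc, Functor.id_obj, Tpp_a D M, Tp_p D M, neg_p_a D N, N.neg_p])
  calc D.hadd (g ≫ D.T.map (D.p.app M)) ((g ≫ N.neg (D.T.obj M)) ≫ D.T.map (D.p.app M))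
      = D.hadd g (g ≫ N.neg (D.T.obj M)) ≫ D.T.map (D.p.app M) :=
        (hadd_map D (D.p.app M) hgn).symm
    _ = (g ≫ D.p.app (D.T.obj M) ≫ D.zero.app (D.T.obj M)) ≫ D.T.map (D.p.app M) := by
        rw [hadd_neg D N g]
    _ = g ≫ D.p.app (D.T.obj M) ≫ D.p.app M ≫ D.zero.app M := by
        simp only [Category.assoc]; rw [hTpz]
    _ = (g ≫ D.T.map (D.p.app M)) ≫ D.p.app M ≫ D.zero.app M := by
        simp only [Category.assoc, Tpp_a D M]
    _ = D.hadd (g ≫ D.T.map (D.p.app M)) ((g ≫ D.T.map (D.p.app M)) ≫ N.neg M) :=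
        (hadd_neg D N (g ≫ D.T.map (D.p.app M))).symm

private lemma idpair (D : TangentCat C) (M : C) :
    (D.T2 M).pair (D.T2 M).pr0 (D.T2 M).pr1 (D.T2 M).comm = 𝟙 (D.T2 M).P :=
  (D.T2 M).hom_ext _ _ (by rw [(D.T2 M).pair_pr0, Category.id_comp])
    (by rw [(D.T2 M).pair_pr1, Category.id_comp])

private lemma comm_a (D : TangentCat C) (M : C) {Z : C} (t : M ⟶ Z) :
    (D.T2 M).pr0 ≫ D.p.app M ≫ t = (D.T2 M).pr1 ≫ D.p.app M ≫ t := by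
  rw [← Category.assoc, (D.T2 M).comm, Category.assoc]

private lemma cp_a (D : TangentCat C) (M : C) {Z : C} (t : D.T.obj M ⟶ Z) :
    D.c.app M ≫ D.p.app (D.T.obj M) ≫ t = D.T.map (D.p.app M) ≫ t := by
  rw [← Category.assoc, D.c_p]

private lemma lp_a (D : TangentCat C) (M : C) {Z : C} (t : D.T.obj M ⟶ Z) :
    D.l.app M ≫ D.p.app (D.T.obj M) ≫ t = D.p.app M ≫ D.zero.app M ≫ t := by
  rw [← Category.assoc, l_p' D M, Category.assoc]

private lemma map_comp_a (D : TangentCat C) {A B E Z : C} (f : A ⟶ B) (g : B ⟶ E)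
    (t : D.T.obj E ⟶ Z) :
    D.T.map f ≫ D.T.map g ≫ t = D.T.map (f ≫ g) ≫ t := by
  rw [← Category.assoc, ← Functor.map_comp]

private lemma add_l (D : TangentCat C) (M : C)
    (h : ((D.T2 M).pr0 ≫ D.l.app M) ≫ D.p.app (D.T.obj M)
        = ((D.T2 M).pr1 ≫ D.l.app M) ≫ D.p.app (D.T.obj M)) :
    D.add M ≫ D.l.app M
      = (D.T2 (D.T.obj M)).pair ((D.T2 M).pr0 ≫ D.l.app M) ((D.T2 M).pr1 ≫ D.l.app M) h
          ≫ D.add (D.T.obj M) := by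
  have e1 := l_hadd D ((D.T2 M).comm)
  rw [hadd_def D ((D.T2 M).comm), idpair D M, Category.id_comp] at e1
  rw [e1]
  exact hadd_def D h

private lemma K_Tadd (D : TangentCat C) {M : C} (K : D.T.obj (D.T.obj M) ⟶ D.T.obj M)
    (hK : IsVerticalConnection D (D.p.app M) (D.l.app M) K)
    {X : C} (w : X ⟶ D.T.obj (D.T2 M).P) :
    w ≫ D.T.map (D.add M) ≫ K
      = D.hadd (w ≫ D.T.map (D.T2 M).pr0 ≫ K) (w ≫ D.T.map (D.T2 M).pr1 ≫ K) := by
  have pn0 : ∀ {Z : C} (t : D.T.obj M ⟶ Z),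
      D.T.map (D.T2 M).pr0 ≫ D.p.app (D.T.obj M) ≫ t
        = D.p.app (D.T2 M).P ≫ (D.T2 M).pr0 ≫ t := by
    intro Z t; rw [← Category.assoc, p_nat D (D.T2 M).pr0, Category.assoc]
  have pn1 : ∀ {Z : C} (t : D.T.obj M ⟶ Z),
      D.T.map (D.T2 M).pr1 ≫ D.p.app (D.T.obj M) ≫ t
        = D.p.app (D.T2 M).P ≫ (D.T2 M).pr1 ≫ t := by
    intro Z t; rw [← Category.assoc, p_nat D (D.T2 M).pr1, Category.assoc]
  have hbase : (w ≫ D.T.map (D.T2 M).pr0 ≫ K) ≫ D.p.app M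
      = (w ≫ D.T.map (D.T2 M).pr1 ≫ K) ≫ D.p.app M := by
    simp only [Category.assoc, hK.2.1, pn0, pn1, comm_a D M, (D.T2 M).comm]
  have hpl : ((D.T2 M).pr0 ≫ D.l.app M) ≫ D.p.app (D.T.obj M)
      = ((D.T2 M).pr1 ≫ D.l.app M) ≫ D.p.app (D.T.obj M) := by
    simp only [Category.assoc, l_p' D M, lp_a D M]
    rw [← Category.assoc, ← Category.assoc, (D.T2 M).comm]
  have e2 : D.T.map (D.add M) ≫ D.T.map (D.l.app M)
      = D.T.map ((D.T2 (D.T.obj M)).pair ((D.T2 M).pr0 ≫ D.l.app M)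
          ((D.T2 M).pr1 ≫ D.l.app M) hpl) ≫ D.T.map (D.add (D.T.obj M)) := by
    rw [← Functor.map_comp, ← Functor.map_comp, add_l D M hpl]
  have hc : (w ≫ D.T.map (D.T2 M).pr0 ≫ D.T.map (D.l.app M)) ≫ D.T.map (D.p.app (D.T.obj M))
      = (w ≫ D.T.map (D.T2 M).pr1 ≫ D.T.map (D.l.app M)) ≫ D.T.map (D.p.app (D.T.obj M)) := by
    simp only [Category.assoc, ← Functor.map_comp, l_p' D M, comm_a D M]
  have hc' : ((w ≫ D.T.map (D.T2 M).pr0 ≫ D.T.map (D.l.app M)) ≫ D.c.app (D.T.obj M))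
        ≫ D.p.app (D.T.obj (D.T.obj M))
      = ((w ≫ D.T.map (D.T2 M).pr1 ≫ D.T.map (D.l.app M)) ≫ D.c.app (D.T.obj M))
        ≫ D.p.app (D.T.obj (D.T.obj M)) := by
    simp only [Category.assoc, D.c_p, cp_a D (D.T.obj M), ← Functor.map_comp, l_p' D M,
      lp_a D M, comm_a D M, (D.T2 M).comm]
  obtain ⟨ω, hω0, hω1, hωc⟩ := D.c_add (D.T.obj M)
    (w ≫ D.T.map (D.T2 M).pr0 ≫ D.T.map (D.l.app M))
    (w ≫ D.T.map (D.T2 M).pr1 ≫ D.T.map (D.l.app M)) hc hc'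
  have hωw : w ≫ D.T.map ((D.T2 (D.T.obj M)).pair ((D.T2 M).pr0 ≫ D.l.app M)
      ((D.T2 M).pr1 ≫ D.l.app M) hpl) = ω := by
    refine ((D.T2T (D.T.obj M)).hom_ext _ _ ?_ ?_).symm
    · rw [hω0]
      simp only [Category.assoc, ← Functor.map_comp, (D.T2 (D.T.obj M)).pair_pr0]
    · rw [hω1]
      simp only [Category.assoc, ← Functor.map_comp, (D.T2 (D.T.obj M)).pair_pr1]
  have h2 : ((w ≫ D.T.map (D.T2 M).pr0 ≫ D.T.map (D.l.app M)) ≫ D.c.app (D.T.obj M))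
        ≫ D.T.map K ≫ D.p.app (D.T.obj M)
      = ((w ≫ D.T.map (D.T2 M).pr1 ≫ D.T.map (D.l.app M)) ≫ D.c.app (D.T.obj M))
        ≫ D.T.map K ≫ D.p.app (D.T.obj M) := by
    simp only [Category.assoc, p_nat D K, D.c_p, cp_a D (D.T.obj M), ← Functor.map_comp,
      map_comp_a D, l_p' D M, lp_a D M, comm_a D M, (D.T2 M).comm]
  apply l_cancel D K hK
  rw [Category.assoc, Category.assoc, hK.2.2.2]
  -- LHS : w ≫ T(add) ≫ T(l) ≫ c ≫ T(K)
  slice_lhs 2 3 => rw [e2]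
  slice_lhs 1 2 => rw [hωw]
  slice_lhs 1 3 => rw [hωc]
  slice_lhs 1 3 => rw [D.add_nat K _ _ hc' (by
    simpa only [Category.assoc] using h2)]
  have e30 : ((w ≫ D.T.map (D.T2 M).pr0 ≫ D.T.map (D.l.app M)) ≫ D.c.app (D.T.obj M))
      ≫ D.T.map K = (w ≫ D.T.map (D.T2 M).pr0 ≫ K) ≫ D.l.app M := by
    simp only [Category.assoc, hK.2.2.2]
  have e31 : ((w ≫ D.T.map (D.T2 M).pr1 ≫ D.T.map (D.l.app M)) ≫ D.c.app (D.T.obj M))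
      ≫ D.T.map K = (w ≫ D.T.map (D.T2 M).pr1 ≫ K) ≫ D.l.app M := by
    simp only [Category.assoc, hK.2.2.2]
  have hl2 : ((w ≫ D.T.map (D.T2 M).pr0 ≫ K) ≫ D.l.app M) ≫ D.p.app (D.T.obj M)
      = ((w ≫ D.T.map (D.T2 M).pr1 ≫ K) ≫ D.l.app M) ≫ D.p.app (D.T.obj M) := by
    simp only [Category.assoc, l_p' D M, lp_a D M, Kp_a D K hK, pn0, pn1, comm_a D M,
      (D.T2 M).comm]
  calc (D.T2 (D.T.obj M)).pair _ _ _ ≫ D.add (D.T.obj M)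
      = (D.T2 (D.T.obj M)).pair ((w ≫ D.T.map (D.T2 M).pr0 ≫ K) ≫ D.l.app M)
          ((w ≫ D.T.map (D.T2 M).pr1 ≫ K) ≫ D.l.app M) hl2 ≫ D.add (D.T.obj M) := by
        exact congrArg (· ≫ D.add (D.T.obj M)) (pairCongr _ e30 e31 _ _)
    _ = D.hadd ((w ≫ D.T.map (D.T2 M).pr0 ≫ K) ≫ D.l.app M)
          ((w ≫ D.T.map (D.T2 M).pr1 ≫ K) ≫ D.l.app M) := (hadd_def D hl2).symm
    _ = D.hadd (w ≫ D.T.map (D.T2 M).pr0 ≫ K) (w ≫ D.T.map (D.T2 M).pr1 ≫ K)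
          ≫ D.l.app M := (l_hadd D hbase).symm

private lemma vmu_K (D : TangentCat C) (N : HasNegatives D) {M : C}
    (K : D.T.obj (D.T.obj M) ⟶ D.T.obj M)
    (hK : IsVerticalConnection D (D.p.app M) (D.l.app M) K) :
    D.vmu M ≫ K = (D.T2 M).pr0 := by
  obtain ⟨w, h0, h1, hm⟩ := D.vmu_spec M
  rw [hm, Category.assoc, K_Tadd D K hK w]
  have e0 : w ≫ D.T.map (D.T2 M).pr0 ≫ K = (D.T2 M).pr0 := by
    rw [← Category.assoc, h0, Category.assoc, hK.1, Category.comp_id]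
  have e1 : w ≫ D.T.map (D.T2 M).pr1 ≫ K = (D.T2 M).pr1 ≫ D.p.app M ≫ D.zero.app M := by
    rw [← Category.assoc, h1, Category.assoc, K_zero D N K hK]
  rw [e0, e1]
  exact hadd_zero D (comm_a D M (D.zero.app M)).symm

private lemma brk_eq (D : TangentCat C) (N : HasNegatives D) {M : C}
    (K : D.T.obj (D.T.obj M) ⟶ D.T.obj M)
    (hK : IsVerticalConnection D (D.p.app M) (D.l.app M) K)
    {X : C} (f : X ⟶ D.T.obj (D.T.obj M))
    (h : f ≫ D.T.map (D.p.app M) = f ≫ D.T.map (D.p.app M) ≫ D.p.app M ≫ D.zero.app M) :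
    D.brkT f = f ≫ K := by
  rw [TangentCat.brkT, dif_pos h, ← vmu_K D N K hK, ← Category.assoc, D.vlift_vmu f h]

private lemma shuffle (D : TangentCat C) (N : HasNegatives D) {X M : C}
    (A B Cc : X ⟶ D.T.obj M)
    (hAB : A ≫ D.p.app M = B ≫ D.p.app M) (hAC : A ≫ D.p.app M = Cc ≫ D.p.app M) :
    D.hadd (D.hadd A (B ≫ N.neg M)) (D.hadd A (Cc ≫ N.neg M) ≫ N.neg M)
      = D.hadd Cc (B ≫ N.neg M) := by
  have h1 : A ≫ D.p.app M = (B ≫ N.neg M) ≫ D.p.app M := by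
    rw [Category.assoc, N.neg_p, hAB]
  have h2 : A ≫ D.p.app M = (Cc ≫ N.neg M) ≫ D.p.app M := by
    rw [Category.assoc, N.neg_p, hAC]
  have hLp : D.hadd A (B ≫ N.neg M) ≫ D.p.app M = A ≫ D.p.app M := hadd_p D h1
  have hSp : D.hadd A (Cc ≫ N.neg M) ≫ D.p.app M = A ≫ D.p.app M := hadd_p D h2
  have hSn : (D.hadd A (Cc ≫ N.neg M) ≫ N.neg M) ≫ D.p.app M = A ≫ D.p.app M := by
    rw [Category.assoc, N.neg_p, hSp]
  have hL2 : D.hadd A (B ≫ N.neg M) ≫ D.p.app M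
      = (D.hadd A (Cc ≫ N.neg M) ≫ N.neg M) ≫ D.p.app M := by rw [hLp, hSn]
  have hC2 : Cc ≫ D.p.app M = (B ≫ N.neg M) ≫ D.p.app M := by
    rw [Category.assoc, N.neg_p, ← hAB, hAC]
  apply hadd_cancel D N (x := D.hadd A (Cc ≫ N.neg M))
    (by rw [hadd_p D hL2, hLp, hSp]) (by rw [hadd_p D hC2, hSp, hAC])
  have lhs_eq : D.hadd (D.hadd A (Cc ≫ N.neg M))
      (D.hadd (D.hadd A (B ≫ N.neg M)) (D.hadd A (Cc ≫ N.neg M) ≫ N.neg M))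
      = D.hadd A (B ≫ N.neg M) := by
    rw [hadd_comm D (by rw [hSp, hadd_p D hL2, hLp])]
    rw [hadd_assoc D hL2 (by rw [hSn, hSp])]
    rw [hadd_comm D (f := D.hadd A (Cc ≫ N.neg M) ≫ N.neg M) (by rw [hSn, hSp])]
    rw [hadd_neg D N (D.hadd A (Cc ≫ N.neg M))]
    exact hadd_zero D (by rw [← Category.assoc, hSp, ← hLp, Category.assoc])
  have rhs_eq : D.hadd (D.hadd A (Cc ≫ N.neg M)) (D.hadd Cc (B ≫ N.neg M))
      = D.hadd A (B ≫ N.neg M) := by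
    rw [hadd_assoc D h2 (by rw [Category.assoc, N.neg_p, hadd_p D hC2])]
    rw [← hadd_assoc D (f := Cc ≫ N.neg M) (g := Cc) (k := B ≫ N.neg M)
      (by rw [Category.assoc, N.neg_p]) hC2]
    rw [hadd_comm D (f := Cc ≫ N.neg M) (g := Cc) (by rw [Category.assoc, N.neg_p])]
    rw [hadd_neg D N Cc]
    rw [hadd_comm D (f := Cc ≫ D.p.app M ≫ D.zero.app M) (g := B ≫ N.neg M) (by
      rw [Category.assoc, Category.assoc, D.zero_p]
      simp only [Category.comp_id, Functor.id_obj]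
      rw [Category.assoc, N.neg_p, ← hAB, hAC])]
    rw [hadd_zero D (f := B ≫ N.neg M) (z := Cc ≫ D.p.app M ≫ D.zero.app M)
      (by rw [← Category.assoc, hC2, Category.assoc])]
  rw [lhs_eq, rhs_eq]

end Aux


/-- In a tangent category with negatives, for an affine
vertical connection `K : T²(M) → T(M)` (a vertical connection on the tangent
bundle `p_M`) and vector fields `w₁, w₂` on `M`, the torsion tensor
`T_K(w₁,w₂) = w₂T(w₁)V_K` (with `V_K = cK − K`) is given by the standard
expression `∇_K(w₁,w₂) − ∇_K(w₂,w₁) − [w₁,w₂]`. -/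
theorem stmt6 (D : TangentCat C) (N : HasNegatives D) {M : C}
    (K : D.T.obj (D.T.obj M) ⟶ D.T.obj M)
    (hK : IsVerticalConnection D (D.p.app M) (D.l.app M) K)
    (w1 w2 : M ⟶ D.T.obj M) (hw1 : w1 ≫ D.p.app M = 𝟙 M)
    (hw2 : w2 ≫ D.p.app M = 𝟙 M) :
    w2 ≫ D.T.map w1 ≫ D.sub N (D.c.app M ≫ K) K
      = D.sub N
          (D.sub N (w1 ≫ D.T.map w2 ≫ K) (w2 ≫ D.T.map w1 ≫ K))
          (D.lie N w1 w2) := by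
  have pnw1 : ∀ {Z : C} (t : D.T.obj M ⟶ Z),
      D.T.map w1 ≫ D.p.app (D.T.obj M) ≫ t = D.p.app M ≫ w1 ≫ t := by
    intro Z t; rw [← Category.assoc, p_nat D w1, Category.assoc]
  have pnw2 : ∀ {Z : C} (t : D.T.obj M ⟶ Z),
      D.T.map w2 ≫ D.p.app (D.T.obj M) ≫ t = D.p.app M ≫ w2 ≫ t := by
    intro Z t; rw [← Category.assoc, p_nat D w2, Category.assoc]
  have F1 : w1 ≫ D.T.map w2 ≫ D.T.map (D.p.app M) = w1 := by
    rw [← Functor.map_comp, hw2, CategoryTheory.Functor.map_id, Category.comp_id]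
  have F3 : w2 ≫ D.T.map w1 ≫ D.T.map (D.p.app M) = w2 := by
    rw [← Functor.map_comp, hw1, CategoryTheory.Functor.map_id, Category.comp_id]
  have F2 : w1 ≫ D.T.map w2 ≫ D.p.app (D.T.obj M) = w2 := by
    rw [p_nat D w2, ← Category.assoc, hw1, Category.id_comp]
  have F5 : w2 ≫ D.T.map w1 ≫ D.c.app M ≫ D.T.map (D.p.app M) = w1 := by
    rw [c_Tp D M, p_nat D w1, ← Category.assoc, hw2, Category.id_comp]
  have F6 : w2 ≫ D.T.map w1 ≫ D.c.app M ≫ D.p.app (D.T.obj M) = w2 := by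
    rw [D.c_p]; exact F3
  have GA : (w1 ≫ D.T.map w2 ≫ K) ≫ D.p.app M = 𝟙 M := by
    simp only [Category.assoc, hK.2.1, pnw2]
    rw [← Category.assoc, hw1, Category.id_comp, hw2]
  have GB : (w2 ≫ D.T.map w1 ≫ K) ≫ D.p.app M = 𝟙 M := by
    simp only [Category.assoc, hK.2.1, pnw1]
    rw [← Category.assoc, hw2, Category.id_comp, hw1]
  have GC : (w2 ≫ D.T.map w1 ≫ D.c.app M ≫ K) ≫ D.p.app M = 𝟙 M := by
    simp only [Category.assoc, hK.2.1, cp_a D M, Tp_p D M, pnw1]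
    rw [← Category.assoc, hw2, Category.id_comp, hw1]
  have hcond : (D.c.app M ≫ K) ≫ D.p.app M = (K ≫ N.neg M) ≫ D.p.app M := by
    simp only [Category.assoc, N.neg_p, hK.2.1, cp_a D M, Tp_p D M]
  have hcond2 : (D.T.map w1 ≫ D.c.app M ≫ K) ≫ D.p.app M
      = (D.T.map w1 ≫ K ≫ N.neg M) ≫ D.p.app M := by
    simp only [Category.assoc, N.neg_p, hK.2.1, cp_a D M, Tp_p D M]
  have hfcond : (w1 ≫ D.T.map w2) ≫ D.p.app (D.T.obj M)
      = ((w2 ≫ D.T.map w1 ≫ D.c.app M) ≫ N.neg (D.T.obj M)) ≫ D.p.app (D.T.obj M) := by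
    simp only [Category.assoc, N.neg_p, F2, F6]
  set f1 := D.hadd (w1 ≫ D.T.map w2)
    ((w2 ≫ D.T.map w1 ≫ D.c.app M) ≫ N.neg (D.T.obj M)) with hf1
  have hfTp : f1 ≫ D.T.map (D.p.app M) = D.zero.app M := by
    rw [hf1, hadd_map D (D.p.app M) hfcond,
      neg_Tp D N (w2 ≫ D.T.map w1 ≫ D.c.app M),
      show (w1 ≫ D.T.map w2) ≫ D.T.map (D.p.app M) = w1 from by
        rw [Category.assoc]; exact F1,
      show (w2 ≫ D.T.map w1 ≫ D.c.app M) ≫ D.T.map (D.p.app M) = w1 from by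
        simp only [Category.assoc]; exact F5,
      hadd_neg D N w1, ← Category.assoc, hw1, Category.id_comp]
  have hbrk : f1 ≫ D.T.map (D.p.app M)
      = f1 ≫ D.T.map (D.p.app M) ≫ D.p.app M ≫ D.zero.app M := by
    conv_rhs => rw [← Category.assoc]
    rw [hfTp, zero_p_a D M]
  have lieEq : D.lie N w1 w2 = D.hadd (w1 ≫ D.T.map w2 ≫ K)
      ((w2 ≫ D.T.map w1 ≫ D.c.app M ≫ K) ≫ N.neg M) := by
    have : D.lie N w1 w2 = D.brkT f1 := by
      simp only [TangentCat.lie, TangentCat.sub, hf1]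
    rw [this, brk_eq D N K hK f1 hbrk, hf1, hadd_K D K hK hfcond,
      neg_K D N K hK (w2 ≫ D.T.map w1 ≫ D.c.app M)]
    simp only [Category.assoc]
  have SH := shuffle D N (w1 ≫ D.T.map w2 ≫ K) (w2 ≫ D.T.map w1 ≫ K)
    (w2 ≫ D.T.map w1 ≫ D.c.app M ≫ K) (by rw [GA, GB]) (by rw [GA, GC])
  simp only [Category.assoc] at SH
  simp only [TangentCat.sub]
  rw [lieEq, hadd_pre D (D.T.map w1) hcond, hadd_pre D w2 hcond2]
  simp only [Category.assoc]
  exact SH.symm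
end

section
/- In a tangent category with negatives, let K : T²(M) → T(M) be a torsion-free affine vertical connection (cK = K) with associated curvature C := cT(K)K − T(K)K : T³(M) → T(M). Then: (i) (anti-symmetry) cC = −C; (ii) (first Bianchi identity) C + cT(c)C + T(c)cC = 0; (iii) (second Bianchi identity) D + T(c)T²(c)D + T²(c)T(c)D = 0, where D := T(C)K : T⁴(M) → T(M). -/
open CategoryTheory CategoryTheory.Limits

open scoped Classical

universe v u

variable {C : Type u} [Category.{v} C]

/-- The curvature `C_K = cT(K)K − T(K)K : T³(M) → T(M)` of an affine vertical
connection `K : T²(M) → T(M)`, in a tangent category with negatives. -/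
noncomputable def affCurv (D : TangentCat C) (N : HasNegatives D) {M : C}
    (K : D.T.obj (D.T.obj M) ⟶ D.T.obj M) :
    D.T.obj (D.T.obj (D.T.obj M)) ⟶ D.T.obj M :=
  D.sub N (D.c.app (D.T.obj M) ≫ D.T.map K ≫ K) (D.T.map K ≫ K)

/-! ### Auxiliary lemmas for Statement 8 -/

theorem ChosenPB.comp_pair {A B Z : C} {f : A ⟶ Z} {g : B ⟶ Z}
    (PB : ChosenPB f g) {X Y : C} (w : Y ⟶ X) (u : X ⟶ A) (v : X ⟶ B)
    (h : u ≫ f = v ≫ g) :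
    w ≫ PB.pair u v h
      = PB.pair (w ≫ u) (w ≫ v) (by rw [Category.assoc, Category.assoc, h]) :=
  PB.hom_ext _ _
    (by rw [Category.assoc, PB.pair_pr0, PB.pair_pr0])
    (by rw [Category.assoc, PB.pair_pr1, PB.pair_pr1])

theorem ChosenPB.pair_congr {A B Z : C} {f : A ⟶ Z} {g : B ⟶ Z}
    (PB : ChosenPB f g) {X : C} {u u' : X ⟶ A} {v v' : X ⟶ B}
    (hu : u = u') (hv : v = v') (h : u ≫ f = v ≫ g)
    (h' : u' ≫ f = v' ≫ g) :
    PB.pair u v h = PB.pair u' v' h' := by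
  subst hu; subst hv; rfl

namespace TangentCat

variable (D : TangentCat C)

theorem p_nat {A B : C} (f : A ⟶ B) :
    D.T.map f ≫ D.p.app B = D.p.app A ≫ f := by
  simpa using D.p.naturality f

theorem zero_nat {A B : C} (f : A ⟶ B) :
    f ≫ D.zero.app B = D.zero.app A ≫ D.T.map f := by
  simpa using D.zero.naturality f

theorem c_nat {A B : C} (f : A ⟶ B) :
    D.T.map (D.T.map f) ≫ D.c.app B = D.c.app A ≫ D.T.map (D.T.map f) := by
  simpa using D.c.naturality f

theorem l_p (M : C) :
    D.l.app M ≫ D.p.app (D.T.obj M) = D.p.app M ≫ D.zero.app M := by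
  rw [← D.l_c M, Category.assoc, D.c_p, D.l_Tp]

theorem c_Tp (M : C) :
    D.c.app M ≫ D.T.map (D.p.app M) = D.p.app (D.T.obj M) := by
  rw [← D.c_p M, ← Category.assoc, D.c_c]; simp

theorem hadd_eq {X M : C} {f g : X ⟶ D.T.obj M}
    (h : f ≫ D.p.app M = g ≫ D.p.app M) :
    D.hadd f g = (D.T2 M).pair f g h ≫ D.add M := by
  rw [TangentCat.hadd, dif_pos h]

theorem hadd_p {X M : C} {f g : X ⟶ D.T.obj M}
    (h : f ≫ D.p.app M = g ≫ D.p.app M) :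
    D.hadd f g ≫ D.p.app M = f ≫ D.p.app M := by
  rw [D.hadd_eq h, Category.assoc, D.add_p, ← Category.assoc, (D.T2 M).pair_pr0]

theorem hadd_precomp {X Y M : C} (w : Y ⟶ X) {f g : X ⟶ D.T.obj M}
    (h : f ≫ D.p.app M = g ≫ D.p.app M) :
    w ≫ D.hadd f g = D.hadd (w ≫ f) (w ≫ g) := by
  rw [D.hadd_eq h,
    D.hadd_eq (show (w ≫ f) ≫ D.p.app M = (w ≫ g) ≫ D.p.app M by
      rw [Category.assoc, Category.assoc, h]),
    ← Category.assoc, ChosenPB.comp_pair]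

theorem sub_precomp (N : HasNegatives D) {X Y M : C} (w : Y ⟶ X)
    {f g : X ⟶ D.T.obj M} (h : f ≫ D.p.app M = g ≫ D.p.app M) :
    w ≫ D.sub N f g = D.sub N (w ≫ f) (w ≫ g) := by
  rw [TangentCat.sub, TangentCat.sub,
    D.hadd_precomp w (show f ≫ D.p.app M = (g ≫ N.neg M) ≫ D.p.app M by
      rw [Category.assoc, N.neg_p, h]), Category.assoc]

end TangentCat

/-- The fibre of the tangent bundle over a fixed generalised point `β`. -/
@[ext]
structure Fib (D : TangentCat C) (N : HasNegatives D) {X M : C} (β : X ⟶ M) where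
  val : X ⟶ D.T.obj M
  prop : val ≫ D.p.app M = β

namespace Fib

variable {D : TangentCat C} {N : HasNegatives D} {X M : C} {β : X ⟶ M}

/-- adding-a-zero lemma in subst-friendly form -/
theorem pair_add_zero (f s : X ⟶ D.T.obj M)
    (hs : s = f ≫ D.p.app M ≫ D.zero.app M)
    (h : f ≫ D.p.app M = s ≫ D.p.app M) :
    (D.T2 M).pair f s h ≫ D.add M = f := by
  subst hs; exact D.add_zero' M f h

noncomputable instance : Add (Fib D N β) :=
  ⟨fun x y => ⟨(D.T2 M).pair x.val y.val (x.prop.trans y.prop.symm) ≫ D.add M, by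
    rw [Category.assoc, D.add_p, ← Category.assoc, (D.T2 M).pair_pr0, x.prop]⟩⟩

instance : Zero (Fib D N β) :=
  ⟨⟨β ≫ D.zero.app M, by rw [Category.assoc, D.zero_p, Category.comp_id]⟩⟩

noncomputable instance : Neg (Fib D N β) :=
  ⟨fun x => ⟨x.val ≫ N.neg M, by rw [Category.assoc, N.neg_p, x.prop]⟩⟩

noncomputable instance : AddCommGroup (Fib D N β) where
  add x y := x + y
  zero := 0
  neg x := -x
  add_assoc x y z := by
    obtain ⟨xv, hx⟩ := x; obtain ⟨yv, hy⟩ := y; obtain ⟨zv, hz⟩ := z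
    ext
    exact D.add_assoc' M xv yv zv (hx.trans hy.symm) (hy.trans hz.symm)
      (by rw [Category.assoc, D.add_p, ← Category.assoc, (D.T2 M).pair_pr0]
          exact hx.trans hz.symm)
      (by rw [Category.assoc, D.add_p, ← Category.assoc, (D.T2 M).pair_pr0]
          exact hx.trans hy.symm)
  zero_add x := by
    obtain ⟨xv, hx⟩ := x
    ext
    show (D.T2 M).pair (β ≫ D.zero.app M) xv _ ≫ D.add M = xv
    rw [D.add_comm']
    exact pair_add_zero xv (β ≫ D.zero.app M)
      (by rw [← hx, Category.assoc]) _
  add_zero x := by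
    obtain ⟨xv, hx⟩ := x
    ext
    show (D.T2 M).pair xv (β ≫ D.zero.app M) _ ≫ D.add M = xv
    exact pair_add_zero xv (β ≫ D.zero.app M)
      (by rw [← hx, Category.assoc]) _
  nsmul := nsmulRec
  zsmul := zsmulRec
  neg_add_cancel x := by
    obtain ⟨xv, hx⟩ := x
    ext
    show (D.T2 M).pair (xv ≫ N.neg M) xv _ ≫ D.add M = β ≫ D.zero.app M
    rw [D.add_comm', N.neg_add M xv, ← Category.assoc, hx]
  add_comm x y := by
    obtain ⟨xv, hx⟩ := x; obtain ⟨yv, hy⟩ := y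
    ext
    exact D.add_comm' M xv yv (hx.trans hy.symm)

theorem val_add (x y : Fib D N β) : (x + y).val = D.hadd x.val y.val :=
  (D.hadd_eq (x.prop.trans y.prop.symm)).symm

theorem val_neg (x : Fib D N β) : (-x).val = x.val ≫ N.neg M := rfl

theorem val_zero : (0 : Fib D N β).val = β ≫ D.zero.app M := rfl

theorem val_sub (x y : Fib D N β) : (x - y).val = D.sub N x.val y.val := by
  rw [sub_eq_add_neg, val_add]; rfl

theorem val_p0 (x : Fib D N β) :
    x.val ≫ D.p.app M ≫ D.zero.app M = (0 : Fib D N β).val := by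
  rw [← Category.assoc, x.prop]; rfl

end Fib

theorem Fmca (T : C ⥤ C) {A B E Z' : C} (f : A ⟶ B) (g : B ⟶ E) (w : T.obj E ⟶ Z') :
    T.map f ≫ T.map g ≫ w = T.map (f ≫ g) ≫ w := by
  rw [← Category.assoc, ← T.map_comp]

namespace TangentCat

variable (D : TangentCat C)

theorem p_nat_assoc {A B Z' : C} (f : A ⟶ B) (w : B ⟶ Z') :
    D.T.map f ≫ D.p.app B ≫ w = D.p.app A ≫ f ≫ w := by
  rw [← Category.assoc, D.p_nat, Category.assoc]

theorem zero_nat_assoc {A B Z' : C} (f : A ⟶ B) (w : D.T.obj B ⟶ Z') :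
    f ≫ D.zero.app B ≫ w = D.zero.app A ≫ D.T.map f ≫ w := by
  rw [← Category.assoc, D.zero_nat, Category.assoc]

theorem c_nat_assoc {A B Z' : C} (f : A ⟶ B) (w : D.T.obj (D.T.obj B) ⟶ Z') :
    D.T.map (D.T.map f) ≫ D.c.app B ≫ w = D.c.app A ≫ D.T.map (D.T.map f) ≫ w := by
  rw [← Category.assoc, D.c_nat, Category.assoc]

theorem c_p_assoc (M : C) {Z' : C} (w : D.T.obj M ⟶ Z') :
    D.c.app M ≫ D.p.app (D.T.obj M) ≫ w = D.T.map (D.p.app M) ≫ w := by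
  rw [← Category.assoc, D.c_p]

theorem c_Tp_assoc (M : C) {Z' : C} (w : D.T.obj M ⟶ Z') :
    D.c.app M ≫ D.T.map (D.p.app M) ≫ w = D.p.app (D.T.obj M) ≫ w := by
  rw [← Category.assoc, D.c_Tp]

theorem c_c_assoc (M : C) {Z' : C} (w : D.T.obj (D.T.obj M) ⟶ Z') :
    D.c.app M ≫ D.c.app M ≫ w = w := by
  rw [← Category.assoc, D.c_c]; exact Category.id_comp w

theorem l_p_assoc (M : C) {Z' : C} (w : D.T.obj M ⟶ Z') :
    D.l.app M ≫ D.p.app (D.T.obj M) ≫ w = D.p.app M ≫ D.zero.app M ≫ w := by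
  rw [← Category.assoc, D.l_p, Category.assoc]

theorem l_Tp_assoc (M : C) {Z' : C} (w : D.T.obj M ⟶ Z') :
    D.l.app M ≫ D.T.map (D.p.app M) ≫ w = D.p.app M ≫ D.zero.app M ≫ w := by
  rw [← Category.assoc, D.l_Tp, Category.assoc]

theorem l_c_assoc (M : C) {Z' : C} (w : D.T.obj (D.T.obj M) ⟶ Z') :
    D.l.app M ≫ D.c.app M ≫ w = D.l.app M ≫ w := by
  rw [← Category.assoc, D.l_c]

theorem zero_p_assoc (M : C) {Z' : C} (w : M ⟶ Z') :
    D.zero.app M ≫ D.p.app M ≫ w = w := by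
  rw [← Category.assoc, D.zero_p]; exact Category.id_comp w

theorem l_zero_assoc (M : C) {Z' : C} (w : D.T.obj (D.T.obj M) ⟶ Z') :
    D.zero.app M ≫ D.l.app M ≫ w = D.zero.app M ≫ D.T.map (D.zero.app M) ≫ w := by
  rw [← Category.assoc, D.l_zero, Category.assoc]

theorem c_zero_assoc (M : C) {Z' : C} (w : D.T.obj (D.T.obj M) ⟶ Z') :
    D.T.map (D.zero.app M) ≫ D.c.app M ≫ w = D.zero.app (D.T.obj M) ≫ w := by
  rw [← Category.assoc, D.c_zero]

theorem cTc_assoc (M : C) {Z' : C} (w : D.T.obj (D.T.obj (D.T.obj M)) ⟶ Z') :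
    D.c.app (D.T.obj M) ≫ D.T.map (D.c.app M) ≫ D.c.app (D.T.obj M) ≫ w
      = D.T.map (D.c.app M) ≫ D.c.app (D.T.obj M) ≫ D.T.map (D.c.app M) ≫ w := by
  have h := D.c_T_c M
  simp only [← Category.assoc] at h ⊢
  rw [h]

theorem sub_p (N : HasNegatives D) {X M : C} {f g : X ⟶ D.T.obj M}
    (h : f ≫ D.p.app M = g ≫ D.p.app M) :
    D.sub N f g ≫ D.p.app M = f ≫ D.p.app M := by
  rw [TangentCat.sub]
  exact D.hadd_p (by rw [Category.assoc, N.neg_p, h])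

end TangentCat

section Parts12

variable (D : TangentCat C) (N : HasNegatives D) {M : C}
  (K : D.T.obj (D.T.obj M) ⟶ D.T.obj M)

/-- `b ≫ p = p ≫ p ≫ p`. -/
theorem TKKp (hK : IsVerticalConnection D (D.p.app M) (D.l.app M) K) :
    D.T.map K ≫ K ≫ D.p.app M
      = D.p.app (D.T.obj (D.T.obj M)) ≫ D.p.app (D.T.obj M) ≫ D.p.app M := by
  rw [hK.2.1, D.p_nat_assoc K, hK.2.1]

/-- `a ≫ p = p ≫ p ≫ p`. -/
theorem cTKKp (hK : IsVerticalConnection D (D.p.app M) (D.l.app M) K) :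
    D.c.app (D.T.obj M) ≫ D.T.map K ≫ K ≫ D.p.app M
      = D.p.app (D.T.obj (D.T.obj M)) ≫ D.p.app (D.T.obj M) ≫ D.p.app M := by
  rw [TKKp D K hK, D.c_p_assoc,
    D.p_nat_assoc (A := D.T.obj (D.T.obj M)) (B := D.T.obj M)
      (D.p.app (D.T.obj M)) (D.p.app M)]

/-- `g ≫ p = p ≫ p ≫ p`. -/
theorem TccTKKp (hK : IsVerticalConnection D (D.p.app M) (D.l.app M) K) :
    D.T.map (D.c.app M) ≫ D.c.app (D.T.obj M) ≫ D.T.map K ≫ K ≫ D.p.app M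
      = D.p.app (D.T.obj (D.T.obj M)) ≫ D.p.app (D.T.obj M) ≫ D.p.app M := by
  rw [cTKKp D K hK,
    D.p_nat_assoc (A := D.T.obj (D.T.obj M)) (B := D.T.obj (D.T.obj M))
      (D.c.app M) (D.p.app (D.T.obj M) ≫ D.p.app M),
    D.c_p_assoc M (D.p.app M),
    D.p_nat (A := D.T.obj M) (B := M) (D.p.app M)]

theorem TcTKKp (hK : IsVerticalConnection D (D.p.app M) (D.l.app M) K)
    (htf : D.c.app M ≫ K = K) :
    D.T.map (D.c.app M) ≫ D.T.map K ≫ K ≫ D.p.app M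
      = D.p.app (D.T.obj (D.T.obj M)) ≫ D.p.app (D.T.obj M) ≫ D.p.app M := by
  rw [Fmca D.T (D.c.app M) K (K ≫ D.p.app M), htf, TKKp D K hK]

theorem curv_eq :
    affCurv D N K = D.sub N (D.c.app (D.T.obj M) ≫ D.T.map K ≫ K) (D.T.map K ≫ K) := rfl

theorem hid2 (htf : D.c.app M ≫ K = K) :
    D.c.app (D.T.obj M) ≫ D.T.map (D.c.app M) ≫ D.T.map K ≫ K
      = D.c.app (D.T.obj M) ≫ D.T.map K ≫ K := by
  rw [Fmca D.T (D.c.app M) K K, htf]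

theorem hid1 (htf : D.c.app M ≫ K = K) :
    D.c.app (D.T.obj M) ≫ D.T.map (D.c.app M) ≫ D.c.app (D.T.obj M) ≫ D.T.map K ≫ K
      = D.T.map (D.c.app M) ≫ D.c.app (D.T.obj M) ≫ D.T.map K ≫ K := by
  rw [D.cTc_assoc M (D.T.map K ≫ K), Fmca D.T (D.c.app M) K K, htf]

theorem hid3 (htf : D.c.app M ≫ K = K) :
    D.T.map (D.c.app M) ≫ D.c.app (D.T.obj M) ≫ D.c.app (D.T.obj M) ≫ D.T.map K ≫ K
      = D.T.map K ≫ K := by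
  rw [D.c_c_assoc (D.T.obj M) (D.T.map K ≫ K), Fmca D.T (D.c.app M) K K, htf]

theorem hab (hK : IsVerticalConnection D (D.p.app M) (D.l.app M) K) :
    (D.c.app (D.T.obj M) ≫ D.T.map K ≫ K) ≫ D.p.app M
      = (D.T.map K ≫ K) ≫ D.p.app M := by
  simp only [Category.assoc]
  rw [cTKKp D K hK, TKKp D K hK]

theorem part_i (hK : IsVerticalConnection D (D.p.app M) (D.l.app M) K) :
    D.c.app (D.T.obj M) ≫ affCurv D N K = affCurv D N K ≫ N.neg M := by
  have key : D.c.app (D.T.obj M) ≫ affCurv D N K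
      = D.sub N (D.T.map K ≫ K) (D.c.app (D.T.obj M) ≫ D.T.map K ≫ K) := by
    rw [curv_eq, D.sub_precomp N (D.c.app (D.T.obj M)) (hab D K hK),
      D.c_c_assoc (D.T.obj M) (D.T.map K ≫ K)]
  let A : Fib D N (M := M) ((D.c.app (D.T.obj M) ≫ D.T.map K ≫ K) ≫ D.p.app M) :=
    ⟨D.c.app (D.T.obj M) ≫ D.T.map K ≫ K, rfl⟩
  let B : Fib D N (M := M) ((D.c.app (D.T.obj M) ≫ D.T.map K ≫ K) ≫ D.p.app M) :=
    ⟨D.T.map K ≫ K, (hab D K hK).symm⟩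
  have eA : D.sub N (D.c.app (D.T.obj M) ≫ D.T.map K ≫ K) (D.T.map K ≫ K)
      = (A - B).val := by rw [Fib.val_sub]
  have eB : D.sub N (D.T.map K ≫ K) (D.c.app (D.T.obj M) ≫ D.T.map K ≫ K)
      = (B - A).val := by rw [Fib.val_sub]
  rw [key, eB, show B - A = -(A - B) by abel, Fib.val_neg, curv_eq, eA]

theorem part_ii (hK : IsVerticalConnection D (D.p.app M) (D.l.app M) K)
    (htf : D.c.app M ≫ K = K) :
    D.hadd (D.hadd (affCurv D N K)
        (D.c.app (D.T.obj M) ≫ D.T.map (D.c.app M) ≫ affCurv D N K))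
        (D.T.map (D.c.app M) ≫ D.c.app (D.T.obj M) ≫ affCurv D N K)
      = affCurv D N K ≫ D.p.app M ≫ D.zero.app M := by
  have h2ab : (D.T.map (D.c.app M) ≫ D.c.app (D.T.obj M) ≫ D.T.map K ≫ K) ≫ D.p.app M
      = (D.T.map (D.c.app M) ≫ D.T.map K ≫ K) ≫ D.p.app M := by
    simp only [Category.assoc]
    rw [TccTKKp D K hK, TcTKKp D K hK htf]
  have h3ab : (D.c.app (D.T.obj M) ≫ D.c.app (D.T.obj M) ≫ D.T.map K ≫ K) ≫ D.p.app M
      = (D.c.app (D.T.obj M) ≫ D.T.map K ≫ K) ≫ D.p.app M := by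
    simp only [Category.assoc]
    rw [D.c_c_assoc (D.T.obj M), TKKp D K hK,
      D.c_p_assoc (D.T.obj M) (D.p.app (D.T.obj M) ≫ D.p.app M),
      D.p_nat_assoc (A := D.T.obj (D.T.obj M)) (B := D.T.obj M)
        (D.p.app (D.T.obj M)) (D.p.app M)]
  have e2 : D.c.app (D.T.obj M) ≫ D.T.map (D.c.app M) ≫ affCurv D N K
      = D.sub N (D.T.map (D.c.app M) ≫ D.c.app (D.T.obj M) ≫ D.T.map K ≫ K)
          (D.c.app (D.T.obj M) ≫ D.T.map K ≫ K) := by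
    rw [curv_eq, D.sub_precomp N (D.T.map (D.c.app M)) (hab D K hK),
      D.sub_precomp N (D.c.app (D.T.obj M)) h2ab,
      hid1 D K htf, hid2 D K htf]
  have e3 : D.T.map (D.c.app M) ≫ D.c.app (D.T.obj M) ≫ affCurv D N K
      = D.sub N (D.T.map K ≫ K)
          (D.T.map (D.c.app M) ≫ D.c.app (D.T.obj M) ≫ D.T.map K ≫ K) := by
    rw [curv_eq, D.sub_precomp N (D.c.app (D.T.obj M)) (hab D K hK),
      D.sub_precomp N (D.T.map (D.c.app M)) h3ab,
      hid3 D K htf]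
  let A : Fib D N (M := M) ((D.c.app (D.T.obj M) ≫ D.T.map K ≫ K) ≫ D.p.app M) :=
    ⟨D.c.app (D.T.obj M) ≫ D.T.map K ≫ K, rfl⟩
  let B : Fib D N (M := M) ((D.c.app (D.T.obj M) ≫ D.T.map K ≫ K) ≫ D.p.app M) :=
    ⟨D.T.map K ≫ K, (hab D K hK).symm⟩
  let G : Fib D N (M := M) ((D.c.app (D.T.obj M) ≫ D.T.map K ≫ K) ≫ D.p.app M) :=
    ⟨D.T.map (D.c.app M) ≫ D.c.app (D.T.obj M) ≫ D.T.map K ≫ K, by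
      simp only [Category.assoc]
      rw [TccTKKp D K hK, cTKKp D K hK]⟩
  have eA : D.sub N (D.c.app (D.T.obj M) ≫ D.T.map K ≫ K) (D.T.map K ≫ K)
      = (A - B).val := by rw [Fib.val_sub]
  have eGA : D.sub N (D.T.map (D.c.app M) ≫ D.c.app (D.T.obj M) ≫ D.T.map K ≫ K)
      (D.c.app (D.T.obj M) ≫ D.T.map K ≫ K) = (G - A).val := by rw [Fib.val_sub]
  have eBG : D.sub N (D.T.map K ≫ K)
      (D.T.map (D.c.app M) ≫ D.c.app (D.T.obj M) ≫ D.T.map K ≫ K)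
      = (B - G).val := by rw [Fib.val_sub]
  rw [e2, e3, curv_eq, eA, eGA, eBG, ← Fib.val_add, ← Fib.val_add, Fib.val_p0]
  exact congrArg Fib.val (by abel)

end Parts12

theorem PBLift.comp_pair {T : C ⥤ C} {A B Z : C} {f : A ⟶ Z} {g : B ⟶ Z}
    {PB : ChosenPB f g} (L : PBLift T PB) {X Y : C} (w : Y ⟶ X)
    (u : X ⟶ T.obj A) (v : X ⟶ T.obj B) (h : u ≫ T.map f = v ≫ T.map g) :
    w ≫ L.pair u v h
      = L.pair (w ≫ u) (w ≫ v) (by rw [Category.assoc, Category.assoc, h]) :=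
  L.hom_ext _ _
    (by rw [Category.assoc, L.pair_pr0, L.pair_pr0])
    (by rw [Category.assoc, L.pair_pr1, L.pair_pr1])

section Part3

variable (D : TangentCat C) (N : HasNegatives D) {M : C}
  (K : D.T.obj (D.T.obj M) ⟶ D.T.obj M)

theorem vc_Kp_assoc (hK : IsVerticalConnection D (D.p.app M) (D.l.app M) K)
    {Z' : C} (w : M ⟶ Z') :
    K ≫ D.p.app M ≫ w = D.p.app (D.T.obj M) ≫ D.p.app M ≫ w := by
  rw [← Category.assoc, hK.2.1, Category.assoc]

theorem vc_Kl_assoc (hK : IsVerticalConnection D (D.p.app M) (D.l.app M) K)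
    {Z' : C} (w : D.T.obj (D.T.obj M) ⟶ Z') :
    K ≫ D.l.app M ≫ w = D.l.app (D.T.obj M) ≫ D.T.map K ≫ w := by
  rw [← Category.assoc, hK.2.2.1, Category.assoc]

/-- `0_{TM} ≫ K = p ≫ 0`. -/
theorem zeroTM_K (hK : IsVerticalConnection D (D.p.app M) (D.l.app M) K) :
    D.zero.app (D.T.obj M) ≫ K = D.p.app M ≫ D.zero.app M := by
  have h1 : D.zero.app (D.T.obj M) ≫ K ≫ D.l.app M ≫ D.p.app (D.T.obj M)
      = D.p.app M ≫ D.zero.app M := by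
    rw [D.l_p M, vc_Kp_assoc D K hK, D.zero_p_assoc (D.T.obj M)]
  have h2 : D.zero.app (D.T.obj M) ≫ K ≫ D.l.app M ≫ D.p.app (D.T.obj M)
      = D.zero.app (D.T.obj M) ≫ K := by
    rw [vc_Kl_assoc D K hK (D.p.app (D.T.obj M)), D.p_nat K,
      D.l_p_assoc (D.T.obj M) K, D.zero_p_assoc (D.T.obj M)]
  exact h2.symm.trans h1

/-- `T(0) ≫ K = p ≫ 0` (uses torsion-freeness). -/
theorem T0_K (hK : IsVerticalConnection D (D.p.app M) (D.l.app M) K)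
    (htf : D.c.app M ≫ K = K) :
    D.T.map (D.zero.app M) ≫ K = D.p.app M ≫ D.zero.app M := by
  conv_lhs => rw [← htf]
  rw [D.c_zero_assoc M K, zeroTM_K D K hK]

/-- `c` turns `T(+)`-sums into `+_{TM}`-sums. -/
theorem c_shift (Mo : C) {X : C} (u v : X ⟶ D.T.obj (D.T.obj Mo))
    (h : u ≫ D.T.map (D.p.app Mo) = v ≫ D.T.map (D.p.app Mo)) :
    (D.T2T Mo).pair u v h ≫ D.T.map (D.add Mo) ≫ D.c.app Mo
      = (D.T2 (D.T.obj Mo)).pair (u ≫ D.c.app Mo) (v ≫ D.c.app Mo)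
          (by rw [Category.assoc, Category.assoc, D.c_p Mo]; exact h)
        ≫ D.add (D.T.obj Mo) := by
  obtain ⟨w, hw0, hw1, hw⟩ := D.c_add Mo u v h
    (by rw [Category.assoc, Category.assoc, D.c_p Mo]; exact h)
  have hwp : w = (D.T2T Mo).pair u v h :=
    (D.T2T Mo).hom_ext _ _
      (by rw [hw0, (D.T2T Mo).pair_pr0]) (by rw [hw1, (D.T2T Mo).pair_pr1])
  rw [← hwp]
  exact hw

/-- `ℓ` turns `+`-sums into `+_{TM}`-sums. -/
theorem l_hadd_s8 (Mo : C) {X : C} (F G : X ⟶ D.T.obj Mo)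
    (h : F ≫ D.p.app Mo = G ≫ D.p.app Mo)
    (h' : (F ≫ D.l.app Mo) ≫ D.p.app (D.T.obj Mo)
        = (G ≫ D.l.app Mo) ≫ D.p.app (D.T.obj Mo)) :
    (D.T2 (D.T.obj Mo)).pair (F ≫ D.l.app Mo) (G ≫ D.l.app Mo) h'
        ≫ D.add (D.T.obj Mo)
      = ((D.T2 Mo).pair F G h ≫ D.add Mo) ≫ D.l.app Mo := by
  obtain ⟨w, hw0, hw1, hw⟩ := D.l_add Mo F G h
  have hc : (F ≫ D.l.app Mo) ≫ D.T.map (D.p.app Mo)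
      = (G ≫ D.l.app Mo) ≫ D.T.map (D.p.app Mo) := by
    rw [Category.assoc, Category.assoc, D.l_Tp, ← Category.assoc, ← Category.assoc, h]
  have hwp : w = (D.T2T Mo).pair (F ≫ D.l.app Mo) (G ≫ D.l.app Mo) hc :=
    (D.T2T Mo).hom_ext _ _
      (by rw [hw0, (D.T2T Mo).pair_pr0]) (by rw [hw1, (D.T2T Mo).pair_pr1])
  have hw' := congrArg (· ≫ D.c.app Mo) hw
  simp only [Category.assoc] at hw'
  rw [hwp] at hw'
  rw [c_shift D Mo (F ≫ D.l.app Mo) (G ≫ D.l.app Mo) hc] at hw'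
  rw [D.l_c Mo] at hw'
  have harg1 : (F ≫ D.l.app Mo) ≫ D.c.app Mo = F ≫ D.l.app Mo := by
    rw [Category.assoc, D.l_c]
  have harg2 : (G ≫ D.l.app Mo) ≫ D.c.app Mo = G ≫ D.l.app Mo := by
    rw [Category.assoc, D.l_c]
  rw [(D.T2 (D.T.obj Mo)).pair_congr harg1 harg2 _ h'] at hw'
  rw [Category.assoc]
  exact hw'.symm

/-- projection of the canonical `T(Yℓ)c'T(K)` elements. -/
theorem step_compat {V : C} (Y : V ⟶ D.T.obj M) :
    (D.T.map (Y ≫ D.l.app M) ≫ D.c.app (D.T.obj M) ≫ D.T.map K) ≫ D.p.app (D.T.obj M)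
      = D.T.map (Y ≫ D.p.app M ≫ D.zero.app M) ≫ K := by
  simp only [Category.assoc]
  rw [D.p_nat K, D.c_p_assoc (D.T.obj M) K,
    Fmca D.T (Y ≫ D.l.app M) (D.p.app (D.T.obj M)) K,
    show (Y ≫ D.l.app M) ≫ D.p.app (D.T.obj M) = Y ≫ D.p.app M ≫ D.zero.app M by
      rw [Category.assoc, D.l_p M]]

/-- The key step: a `+_{TM}`-sum of two canonical elements is again canonical. -/
theorem step (hK : IsVerticalConnection D (D.p.app M) (D.l.app M) K)
    {V : C} (Y₁ Y₂ : V ⟶ D.T.obj M) (hY : Y₁ ≫ D.p.app M = Y₂ ≫ D.p.app M)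
    (hstep : (D.T.map (Y₁ ≫ D.l.app M) ≫ D.c.app (D.T.obj M) ≫ D.T.map K)
        ≫ D.p.app (D.T.obj M)
      = (D.T.map (Y₂ ≫ D.l.app M) ≫ D.c.app (D.T.obj M) ≫ D.T.map K)
        ≫ D.p.app (D.T.obj M)) :
    (D.T2 (D.T.obj M)).pair
        (D.T.map (Y₁ ≫ D.l.app M) ≫ D.c.app (D.T.obj M) ≫ D.T.map K)
        (D.T.map (Y₂ ≫ D.l.app M) ≫ D.c.app (D.T.obj M) ≫ D.T.map K) hstep
      ≫ D.add (D.T.obj M)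
    = D.T.map (D.hadd Y₁ Y₂ ≫ D.l.app M) ≫ D.c.app (D.T.obj M) ≫ D.T.map K := by
  have hYl : (Y₁ ≫ D.l.app M) ≫ D.p.app (D.T.obj M)
      = (Y₂ ≫ D.l.app M) ≫ D.p.app (D.T.obj M) := by
    rw [Category.assoc, Category.assoc, D.l_p M, ← Category.assoc, ← Category.assoc, hY]
  have hTc : D.T.map (Y₁ ≫ D.l.app M) ≫ D.T.map (D.p.app (D.T.obj M))
      = D.T.map (Y₂ ≫ D.l.app M) ≫ D.T.map (D.p.app (D.T.obj M)) := by
    rw [← D.T.map_comp, ← D.T.map_comp, hYl]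
  have hcc : (D.T.map (Y₁ ≫ D.l.app M) ≫ D.c.app (D.T.obj M))
        ≫ D.p.app (D.T.obj (D.T.obj M))
      = (D.T.map (Y₂ ≫ D.l.app M) ≫ D.c.app (D.T.obj M))
        ≫ D.p.app (D.T.obj (D.T.obj M)) := by
    rw [Category.assoc, Category.assoc, D.c_p (D.T.obj M)]
    exact hTc
  have hcc' : ((D.T.map (Y₁ ≫ D.l.app M) ≫ D.c.app (D.T.obj M)) ≫ D.T.map K)
        ≫ D.p.app (D.T.obj M)
      = ((D.T.map (Y₂ ≫ D.l.app M) ≫ D.c.app (D.T.obj M)) ≫ D.T.map K)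
        ≫ D.p.app (D.T.obj M) := by
    simp only [Category.assoc]
    simp only [Category.assoc] at hstep
    exact hstep
  have h1 := D.add_nat (f := K)
    (D.T.map (Y₁ ≫ D.l.app M) ≫ D.c.app (D.T.obj M))
    (D.T.map (Y₂ ≫ D.l.app M) ≫ D.c.app (D.T.obj M)) hcc hcc'
  have h2 := c_shift D (D.T.obj M)
    (D.T.map (Y₁ ≫ D.l.app M)) (D.T.map (Y₂ ≫ D.l.app M)) hTc
  have h2' := congrArg (· ≫ D.T.map K) h2
  simp only [Category.assoc] at h2'
  rw [(D.T2 (D.T.obj M)).pair_congr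
    (Category.assoc (D.T.map (Y₁ ≫ D.l.app M)) (D.c.app (D.T.obj M)) (D.T.map K)).symm
    (Category.assoc (D.T.map (Y₂ ≫ D.l.app M)) (D.c.app (D.T.obj M)) (D.T.map K)).symm
    hstep hcc']
  rw [← h1, ← h2']
  have hTw : (D.T2T (D.T.obj M)).pair (D.T.map (Y₁ ≫ D.l.app M))
        (D.T.map (Y₂ ≫ D.l.app M)) hTc
      = D.T.map ((D.T2 (D.T.obj M)).pair (Y₁ ≫ D.l.app M) (Y₂ ≫ D.l.app M) hYl) :=
    (D.T2T (D.T.obj M)).hom_ext _ _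
      (by rw [(D.T2T (D.T.obj M)).pair_pr0, ← D.T.map_comp,
        (D.T2 (D.T.obj M)).pair_pr0])
      (by rw [(D.T2T (D.T.obj M)).pair_pr1, ← D.T.map_comp,
        (D.T2 (D.T.obj M)).pair_pr1])
  rw [hTw, Fmca D.T _ (D.add (D.T.obj M)) (D.c.app (D.T.obj M) ≫ D.T.map K),
    l_hadd_s8 D M Y₁ Y₂ hY hYl, ← D.hadd_eq hY]

/-- `(T(Y)K)ℓ` is a canonical element. -/
theorem Dl (hK : IsVerticalConnection D (D.p.app M) (D.l.app M) K)
    {V : C} (Y : V ⟶ D.T.obj M) :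
    (D.T.map Y ≫ K) ≫ D.l.app M
      = D.T.map (Y ≫ D.l.app M) ≫ D.c.app (D.T.obj M) ≫ D.T.map K := by
  rw [Category.assoc, hK.2.2.2,
    Fmca D.T Y (D.l.app M) (D.c.app (D.T.obj M) ≫ D.T.map K)]

theorem DKp (hK : IsVerticalConnection D (D.p.app M) (D.l.app M) K)
    {V : C} (Y : V ⟶ D.T.obj M) :
    (D.T.map Y ≫ K) ≫ D.p.app M = D.p.app V ≫ Y ≫ D.p.app M := by
  rw [Category.assoc, hK.2.1, D.p_nat_assoc]

/-- Sum of two canonical elements, in `hadd` form. -/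
theorem step' (hK : IsVerticalConnection D (D.p.app M) (D.l.app M) K)
    {V : C} (F G : D.T.obj V ⟶ D.T.obj M) (Y₁ Y₂ : V ⟶ D.T.obj M)
    (hF : F ≫ D.l.app M
      = D.T.map (Y₁ ≫ D.l.app M) ≫ D.c.app (D.T.obj M) ≫ D.T.map K)
    (hG : G ≫ D.l.app M
      = D.T.map (Y₂ ≫ D.l.app M) ≫ D.c.app (D.T.obj M) ≫ D.T.map K)
    (hY : Y₁ ≫ D.p.app M = Y₂ ≫ D.p.app M)
    (hFG : F ≫ D.p.app M = G ≫ D.p.app M) :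
    D.hadd F G ≫ D.l.app M
      = D.T.map (D.hadd Y₁ Y₂ ≫ D.l.app M) ≫ D.c.app (D.T.obj M) ≫ D.T.map K := by
  have h2 : (F ≫ D.l.app M) ≫ D.p.app (D.T.obj M)
      = (G ≫ D.l.app M) ≫ D.p.app (D.T.obj M) := by
    rw [Category.assoc, Category.assoc, D.l_p M, ← Category.assoc, ← Category.assoc, hFG]
  have h3 : (D.T.map (Y₁ ≫ D.l.app M) ≫ D.c.app (D.T.obj M) ≫ D.T.map K)
        ≫ D.p.app (D.T.obj M)
      = (D.T.map (Y₂ ≫ D.l.app M) ≫ D.c.app (D.T.obj M) ≫ D.T.map K)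
        ≫ D.p.app (D.T.obj M) := by
    rw [step_compat D K Y₁, step_compat D K Y₂,
      show Y₁ ≫ D.p.app M ≫ D.zero.app M = Y₂ ≫ D.p.app M ≫ D.zero.app M from by
        rw [← Category.assoc, ← Category.assoc, hY]]
  rw [D.hadd_eq hFG, ← l_hadd_s8 D M F G hFG h2,
    (D.T2 (D.T.obj M)).pair_congr hF hG h2 h3]
  exact step D K hK Y₁ Y₂ hY h3

theorem sigc :
    D.c.app (D.T.obj M)
        ≫ D.p.app (D.T.obj (D.T.obj M)) ≫ D.p.app (D.T.obj M) ≫ D.p.app M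
      = D.p.app (D.T.obj (D.T.obj M)) ≫ D.p.app (D.T.obj M) ≫ D.p.app M := by
  rw [D.c_p_assoc (D.T.obj M) (D.p.app (D.T.obj M) ≫ D.p.app M),
    D.p_nat_assoc (A := D.T.obj (D.T.obj M)) (B := D.T.obj M)
      (D.p.app (D.T.obj M)) (D.p.app M)]

theorem sigTc :
    D.T.map (D.c.app M)
        ≫ D.p.app (D.T.obj (D.T.obj M)) ≫ D.p.app (D.T.obj M) ≫ D.p.app M
      = D.p.app (D.T.obj (D.T.obj M)) ≫ D.p.app (D.T.obj M) ≫ D.p.app M := by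
  rw [D.p_nat_assoc (A := D.T.obj (D.T.obj M)) (B := D.T.obj (D.T.obj M))
      (D.c.app M) (D.p.app (D.T.obj M) ≫ D.p.app M),
    D.c_p_assoc M (D.p.app M),
    D.p_nat (A := D.T.obj M) (B := M) (D.p.app M)]

variable (N : HasNegatives D)

theorem X1sig (hK : IsVerticalConnection D (D.p.app M) (D.l.app M) K) :
    affCurv D N K ≫ D.p.app M
      = D.p.app (D.T.obj (D.T.obj M)) ≫ D.p.app (D.T.obj M) ≫ D.p.app M := by
  rw [curv_eq, D.sub_p N (hab D K hK)]
  simp only [Category.assoc]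
  rw [cTKKp D K hK]

theorem X2sig (hK : IsVerticalConnection D (D.p.app M) (D.l.app M) K) :
    (D.c.app (D.T.obj M) ≫ D.T.map (D.c.app M) ≫ affCurv D N K) ≫ D.p.app M
      = D.p.app (D.T.obj (D.T.obj M)) ≫ D.p.app (D.T.obj M) ≫ D.p.app M := by
  simp only [Category.assoc]
  rw [X1sig D K N hK, sigTc D, sigc D]

theorem X3sig (hK : IsVerticalConnection D (D.p.app M) (D.l.app M) K) :
    (D.T.map (D.c.app M) ≫ D.c.app (D.T.obj M) ≫ affCurv D N K) ≫ D.p.app M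
      = D.p.app (D.T.obj (D.T.obj M)) ≫ D.p.app (D.T.obj M) ≫ D.p.app M := by
  simp only [Category.assoc]
  rw [X1sig D K N hK, sigc D, sigTc D]

theorem part_iii (hK : IsVerticalConnection D (D.p.app M) (D.l.app M) K)
    (htf : D.c.app M ≫ K = K) :
    D.hadd (D.hadd (D.T.map (affCurv D N K) ≫ K)
        (D.T.map (D.c.app (D.T.obj M)) ≫ D.T.map (D.T.map (D.c.app M)) ≫
          D.T.map (affCurv D N K) ≫ K))
        (D.T.map (D.T.map (D.c.app M)) ≫ D.T.map (D.c.app (D.T.obj M)) ≫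
          D.T.map (affCurv D N K) ≫ K)
      = D.T.map (affCurv D N K) ≫ K ≫ D.p.app M ≫ D.zero.app M := by
  have hD2 : D.T.map (D.c.app (D.T.obj M) ≫ D.T.map (D.c.app M) ≫ affCurv D N K) ≫ K
      = D.T.map (D.c.app (D.T.obj M)) ≫ D.T.map (D.T.map (D.c.app M)) ≫
          D.T.map (affCurv D N K) ≫ K := by
    simp only [Functor.map_comp, Category.assoc]
  have hD3 : D.T.map (D.T.map (D.c.app M) ≫ D.c.app (D.T.obj M) ≫ affCurv D N K) ≫ K
      = D.T.map (D.T.map (D.c.app M)) ≫ D.T.map (D.c.app (D.T.obj M)) ≫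
          D.T.map (affCurv D N K) ≫ K := by
    simp only [Functor.map_comp, Category.assoc]
  rw [← hD2, ← hD3]
  -- compatibilities
  have hX12 : affCurv D N K ≫ D.p.app M
      = (D.c.app (D.T.obj M) ≫ D.T.map (D.c.app M) ≫ affCurv D N K) ≫ D.p.app M :=
    (X1sig D K N hK).trans (X2sig D K N hK).symm
  have hX13 : affCurv D N K ≫ D.p.app M
      = (D.T.map (D.c.app M) ≫ D.c.app (D.T.obj M) ≫ affCurv D N K) ≫ D.p.app M :=
    (X1sig D K N hK).trans (X3sig D K N hK).symm
  have hX123 : D.hadd (affCurv D N K)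
        (D.c.app (D.T.obj M) ≫ D.T.map (D.c.app M) ≫ affCurv D N K) ≫ D.p.app M
      = (D.T.map (D.c.app M) ≫ D.c.app (D.T.obj M) ≫ affCurv D N K) ≫ D.p.app M :=
    (D.hadd_p hX12).trans hX13
  have cmp12 : (D.T.map (affCurv D N K) ≫ K) ≫ D.p.app M
      = (D.T.map (D.c.app (D.T.obj M) ≫ D.T.map (D.c.app M) ≫ affCurv D N K) ≫ K)
          ≫ D.p.app M := by
    rw [DKp D K hK, DKp D K hK, X1sig D K N hK, X2sig D K N hK]; rfl
  have cmp13 : (D.T.map (affCurv D N K) ≫ K) ≫ D.p.app M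
      = (D.T.map (D.T.map (D.c.app M) ≫ D.c.app (D.T.obj M) ≫ affCurv D N K) ≫ K)
          ≫ D.p.app M := by
    rw [DKp D K hK, DKp D K hK, X1sig D K N hK, X3sig D K N hK]; rfl
  have cmpA : D.hadd (D.T.map (affCurv D N K) ≫ K)
        (D.T.map (D.c.app (D.T.obj M) ≫ D.T.map (D.c.app M) ≫ affCurv D N K) ≫ K)
        ≫ D.p.app M
      = (D.T.map (D.T.map (D.c.app M) ≫ D.c.app (D.T.obj M) ≫ affCurv D N K) ≫ K)
          ≫ D.p.app M :=
    (D.hadd_p cmp12).trans cmp13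
  -- the two `step'` applications
  have s1 := step' D K hK (D.T.map (affCurv D N K) ≫ K)
    (D.T.map (D.c.app (D.T.obj M) ≫ D.T.map (D.c.app M) ≫ affCurv D N K) ≫ K)
    (affCurv D N K)
    (D.c.app (D.T.obj M) ≫ D.T.map (D.c.app M) ≫ affCurv D N K)
    (Dl D K hK _) (Dl D K hK _) hX12 cmp12
  have s2 := step' D K hK
    (D.hadd (D.T.map (affCurv D N K) ≫ K)
      (D.T.map (D.c.app (D.T.obj M) ≫ D.T.map (D.c.app M) ≫ affCurv D N K) ≫ K))
    (D.T.map (D.T.map (D.c.app M) ≫ D.c.app (D.T.obj M) ≫ affCurv D N K) ≫ K)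
    (D.hadd (affCurv D N K)
      (D.c.app (D.T.obj M) ≫ D.T.map (D.c.app M) ≫ affCurv D N K))
    (D.T.map (D.c.app M) ≫ D.c.app (D.T.obj M) ≫ affCurv D N K)
    s1 (Dl D K hK _) hX123 cmpA
  rw [part_ii D N K hK htf] at s2
  -- final simplification of the canonical element at a zero
  have fin : D.T.map ((affCurv D N K ≫ D.p.app M ≫ D.zero.app M) ≫ D.l.app M)
        ≫ D.c.app (D.T.obj M) ≫ D.T.map K
      = (D.T.map (affCurv D N K) ≫ K ≫ D.p.app M ≫ D.zero.app M) ≫ D.l.app M := by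
    rw [show (affCurv D N K ≫ D.p.app M ≫ D.zero.app M) ≫ D.l.app M
        = affCurv D N K ≫ D.p.app M ≫ D.zero.app M ≫ D.T.map (D.zero.app M) from by
      simp only [Category.assoc]; rw [D.l_zero M]]
    simp only [Functor.map_comp, Category.assoc]
    rw [D.c_nat_assoc (A := M) (B := D.T.obj M) (D.zero.app M) (D.T.map K),
      show D.T.map (D.T.map (D.zero.app M)) ≫ D.T.map K
          = D.T.map (D.p.app M) ≫ D.T.map (D.zero.app M) from by
        rw [← D.T.map_comp, T0_K D K hK htf, D.T.map_comp],
      D.c_Tp_assoc M (D.T.map (D.zero.app M)),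
      D.p_nat_assoc (A := M) (B := D.T.obj M) (D.zero.app M) (D.T.map (D.zero.app M)),
      ← D.l_zero M,
      D.p_nat_assoc (A := D.T.obj M) (B := M) (D.p.app M)
        (D.zero.app M ≫ D.l.app M),
      ← vc_Kp_assoc D K hK (D.zero.app M ≫ D.l.app M)]
  rw [fin] at s2
  -- cancel the split mono ℓ
  have hc := congrArg (· ≫ K) s2
  simp only [Category.assoc] at hc
  rw [hK.1] at hc
  simp only [Category.comp_id] at hc
  exact hc

end Part3

/-- In a tangent category with negatives, for a torsion-free
affine vertical connection `K` (`cK = K`) with curvature `C = cT(K)K − T(K)K`: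
(i) anti-symmetry `cC = −C`; (ii) the first Bianchi identity
`C + cT(c)C + T(c)cC = 0`; (iii) the second Bianchi identity
`D + T(c)T²(c)D + T²(c)T(c)D = 0` where `D = T(C)K`. -/
theorem stmt8 (D : TangentCat C) (N : HasNegatives D) {M : C}
    (K : D.T.obj (D.T.obj M) ⟶ D.T.obj M)
    (hK : IsVerticalConnection D (D.p.app M) (D.l.app M) K)
    (htf : D.c.app M ≫ K = K) :
    (D.c.app (D.T.obj M) ≫ affCurv D N K = affCurv D N K ≫ N.neg M) ∧
    (D.hadd (D.hadd (affCurv D N K)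
        (D.c.app (D.T.obj M) ≫ D.T.map (D.c.app M) ≫ affCurv D N K))
        (D.T.map (D.c.app M) ≫ D.c.app (D.T.obj M) ≫ affCurv D N K)
      = affCurv D N K ≫ D.p.app M ≫ D.zero.app M) ∧
    (D.hadd (D.hadd (D.T.map (affCurv D N K) ≫ K)
        (D.T.map (D.c.app (D.T.obj M)) ≫ D.T.map (D.T.map (D.c.app M)) ≫
          D.T.map (affCurv D N K) ≫ K))
        (D.T.map (D.T.map (D.c.app M)) ≫ D.T.map (D.c.app (D.T.obj M)) ≫
          D.T.map (affCurv D N K) ≫ K)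
      = D.T.map (affCurv D N K) ≫ K ≫ D.p.app M ≫ D.zero.app M) :=
  ⟨part_i D N K hK, part_ii D N K hK htf, part_iii D K N hK htf⟩
end
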